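/- arXiv:1504.01032 — 13 statements merged into one kernel-verified Lean document; each statement's English description precedes it below -/
import Mathlib

section
/- Let H be a Hilbert space, A, B maximally monotone operators on H, C a β-cocoercive operator on H with β > 0, and γ ∈ (0, 2β). Define T := I − J_{γB} + J_{γA}∘(2J_{γB} − I − γC∘J_{γB}). If z* is a fixed point of T, then x* := J_{γB}(z*) satisfies 0 ∈ Ax* + Bx* + Cx*. -/
open scoped InnerProductSpace

/-- If `z*` is a fixed point of the three-operator splitting operator
`T = I - J_{γB} + J_{γA}∘(2J_{γB} - I - γC∘J_{γB})`, then `x* = J_{γB} z*`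
is a zero of `A + B + C`. -/
theorem fixed_point_gives_zero
    {H : Type*} [NormedAddCommGroup H] [InnerProductSpace ℝ H] [CompleteSpace H]
    (A B : H → Set H) (C : H → H) (β γ : ℝ)
    (hβ : 0 < β) (hγ : γ ∈ Set.Ioo 0 (2 * β))
    (hAmono : ∀ x y u v, u ∈ A x → v ∈ A y → 0 ≤ ⟪u - v, x - y⟫_ℝ)
    (hBmono : ∀ x y u v, u ∈ B x → v ∈ B y → 0 ≤ ⟪u - v, x - y⟫_ℝ)
    (hC : ∀ x y, β * ‖C x - C y‖ ^ 2 ≤ ⟪C x - C y, x - y⟫_ℝ)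
    (JA JB : H → H)
    (hJA : ∀ z x, JA z = x ↔ γ⁻¹ • (z - x) ∈ A x)
    (hJB : ∀ z x, JB z = x ↔ γ⁻¹ • (z - x) ∈ B x)
    (T : H → H)
    (hT : ∀ z, T z = z - JB z + JA ((2 : ℝ) • JB z - z - γ • C (JB z)))
    (zs : H) (hfix : T zs = zs) :
    ∃ a ∈ A (JB zs), ∃ b ∈ B (JB zs), a + b + C (JB zs) = 0 := by
  set x := JB zs with hx
  have hJAeq : JA ((2 : ℝ) • x - zs - γ • C x) = x := by
    have := hT zs
    rw [hfix] at this
    have h : JA ((2 : ℝ) • x - zs - γ • C x) - x = 0 := by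
      have : zs = zs - x + JA ((2 : ℝ) • x - zs - γ • C x) := this
      abel_nf
      abel_nf at this
      linear_combination (norm := abel_nf) -this
    have := sub_eq_zero.mp h
    exact this
  have ha : γ⁻¹ • ((2 : ℝ) • x - zs - γ • C x - x) ∈ A x := (hJA _ _).mp hJAeq
  have hb : γ⁻¹ • (zs - x) ∈ B x := (hJB _ _).mp rfl
  refine ⟨_, ha, _, hb, ?_⟩
  have hγ0 : γ ≠ 0 := ne_of_gt hγ.1
  match_scalars <;> field_simp <;> ring
end

section
/- Let H be a Hilbert space, A, B maximally monotone operators on H, C a β-cocoercive operator, and γ ∈ (0, 2β). Define T := I − J_{γB} + J_{γA}∘(2J_{γB} − I − γC∘J_{γB}). Then the set of zeros of A + B + C equals the image of the fixed point set of T under J_{γB}: zer(A+B+C) = J_{γB}(Fix T). -/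
open scoped InnerProductSpace

/-- Fixed-point encoding: `zer(A+B+C) = J_{γB}(Fix T)` for the three-operator
splitting operator `T = I - J_{γB} + J_{γA}∘(2J_{γB} - I - γC∘J_{γB})`. -/
theorem zeros_eq_image_of_fixed_points
    {H : Type*} [NormedAddCommGroup H] [InnerProductSpace ℝ H] [CompleteSpace H]
    (A B : H → Set H) (C : H → H) (β γ : ℝ)
    (hβ : 0 < β) (hγ : γ ∈ Set.Ioo 0 (2 * β))
    (hAmono : ∀ x y u v, u ∈ A x → v ∈ A y → 0 ≤ ⟪u - v, x - y⟫_ℝ)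
    (hBmono : ∀ x y u v, u ∈ B x → v ∈ B y → 0 ≤ ⟪u - v, x - y⟫_ℝ)
    (hC : ∀ x y, β * ‖C x - C y‖ ^ 2 ≤ ⟪C x - C y, x - y⟫_ℝ)
    (JA JB : H → H)
    (hJA : ∀ z x, JA z = x ↔ γ⁻¹ • (z - x) ∈ A x)
    (hJB : ∀ z x, JB z = x ↔ γ⁻¹ • (z - x) ∈ B x)
    (T : H → H)
    (hT : ∀ z, T z = z - JB z + JA ((2 : ℝ) • JB z - z - γ • C (JB z))) :
    {x : H | ∃ a ∈ A x, ∃ b ∈ B x, a + b + C x = 0} = JB '' {z : H | T z = z} := by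
  have hγ0 : γ ≠ 0 := ne_of_gt hγ.1
  ext x
  constructor
  · rintro ⟨a, ha, b, hb, hab⟩
    refine ⟨x + γ • b, ?_, ?_⟩
    · have hJBz : JB (x + γ • b) = x := by
        rw [hJB]
        have : γ⁻¹ • (x + γ • b - x) = b := by
          rw [add_sub_cancel_left, smul_smul, inv_mul_cancel₀ hγ0, one_smul]
        rwa [this]
      have hJAz : JA ((2 : ℝ) • x - (x + γ • b) - γ • C x) = x := by
        rw [hJA]
        have h1 : (2 : ℝ) • x - (x + γ • b) - γ • C x - x = γ • (-(b + C x)) := by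
          simp [two_smul, smul_add]
          abel
        have h2 : -(b + C x) = a := by
          have := hab
          linear_combination (norm := module) -this
        rw [h1, h2, smul_smul, inv_mul_cancel₀ hγ0, one_smul]
        exact ha
      show T _ = _
      rw [hT, hJBz, hJAz]
      abel
    · rw [hJB]
      have : γ⁻¹ • (x + γ • b - x) = b := by
        rw [add_sub_cancel_left, smul_smul, inv_mul_cancel₀ hγ0, one_smul]
      rwa [this]
  · rintro ⟨z, hz, rfl⟩
    have hz' : T z = z := hz
    set x := JB z with hx
    have hb : γ⁻¹ • (z - x) ∈ B x := by rw [← hJB]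
    have hJAz : JA ((2 : ℝ) • x - z - γ • C x) = x := by
      rw [hT] at hz'
      linear_combination (norm := module) hz'
    have ha : γ⁻¹ • ((2 : ℝ) • x - z - γ • C x - x) ∈ A x := by
      rw [← hJA]; exact hJAz
    refine ⟨_, ha, _, hb, ?_⟩
    have expand : γ⁻¹ • ((2 : ℝ) • x - z - γ • C x - x) + γ⁻¹ • (z - x) + C x
        = γ⁻¹ • ((2 : ℝ) • x - z - γ • C x - x + (z - x)) + C x := by
      rw [smul_add]
    rw [expand]
    have h3 : (2 : ℝ) • x - z - γ • C x - x + (z - x) = γ • (-C x) := by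
      module
    rw [h3, smul_smul, inv_mul_cancel₀ hγ0, one_smul]
    abel
end

section
/- Let H be a Hilbert space and let U, T₁ : H → H be firmly nonexpansive maps and V : H → H an arbitrary map. Define S := U + T₁∘V and W := I − (2U + V). Then for all z, w ∈ H: ‖Sz − Sw‖² ≤ ‖z − w‖² − ‖(I − S)z − (I − S)w‖² − 2⟨T₁(Vz) − T₁(Vw), Wz − Ww⟩. -/
open scoped InnerProductSpace

/-- Key inequality for `S = U + T₁ ∘ V` with `U`, `T₁` firmly nonexpansive and
`W = I - (2U + V)`. -/
theorem firmly_nonexpansive_composition_inequality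
    {H : Type*} [NormedAddCommGroup H] [InnerProductSpace ℝ H] [CompleteSpace H]
    (U T₁ V : H → H)
    (hU : ∀ x y, ‖U x - U y‖ ^ 2 ≤ ⟪U x - U y, x - y⟫_ℝ)
    (hT₁ : ∀ x y, ‖T₁ x - T₁ y‖ ^ 2 ≤ ⟪T₁ x - T₁ y, x - y⟫_ℝ)
    (S W : H → H)
    (hS : ∀ z, S z = U z + T₁ (V z))
    (hW : ∀ z, W z = z - ((2 : ℝ) • U z + V z)) :
    ∀ z w : H, ‖S z - S w‖ ^ 2 ≤
      ‖z - w‖ ^ 2 - ‖(z - S z) - (w - S w)‖ ^ 2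
        - 2 * ⟪T₁ (V z) - T₁ (V w), W z - W w⟫_ℝ := by
  intro z w
  have ha := hU z w
  have hb := hT₁ (V z) (V w)
  set a := U z - U w with ha'
  set b := T₁ (V z) - T₁ (V w) with hb'
  set d := z - w with hd'
  set v := V z - V w with hv'
  have h1 : S z - S w = a + b := by rw [hS, hS, ha', hb']; abel
  have h2 : (z - S z) - (w - S w) = d - (a + b) := by
    rw [hS, hS, ha', hb', hd']; abel
  have h3 : W z - W w = d - (2 : ℝ) • a - v := by
    rw [hW, hW, ha', hd', hv', smul_sub]; abel
  rw [h1, h2, h3]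
  have e1 : ‖d - (a + b)‖ ^ 2 = ‖d‖ ^ 2 - 2 * ⟪d, a + b⟫_ℝ + ‖a + b‖ ^ 2 := by
    rw [@norm_sub_sq_real]
  have e2 : ⟪b, d - (2:ℝ) • a - v⟫_ℝ = ⟪b, d⟫_ℝ - 2 * ⟪b, a⟫_ℝ - ⟪b, v⟫_ℝ := by
    rw [inner_sub_right, inner_sub_right, real_inner_smul_right]
  have e3 : ‖a + b‖ ^ 2 = ‖a‖ ^ 2 + 2 * ⟪a, b⟫_ℝ + ‖b‖ ^ 2 := norm_add_sq_real a b
  have e4 : ⟪d, a + b⟫_ℝ = ⟪a, d⟫_ℝ + ⟪b, d⟫_ℝ := by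
    rw [inner_add_right, real_inner_comm d a, real_inner_comm d b]
  have e5 : ⟪b, a⟫_ℝ = ⟪a, b⟫_ℝ := real_inner_comm a b
  rw [e1, e2, e4, e5]
  nlinarith [e3]
end

section
/- Let H be a Hilbert space, T₁, T₂ : H → H firmly nonexpansive, C : H → H β-cocoercive with β > 0, and γ ∈ (0, 2β). Define T := I − T₂ + T₁∘(2T₂ − I − γC∘T₂) and α := 2β/(4β − γ). Then α < 1 and for all z, w ∈ H: ‖Tz − Tw‖² ≤ ‖z − w‖² − ((1−α)/α)‖(I−T)z − (I−T)w‖². In particular, T is α-averaged. -/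
/-!
Write `e = z - w`, `d₁`, `d₂` for the increments of `T₁`, `T₂` and `c` for that of `C ∘ T₂`, so that
`Tz - Tw = e - (d₂ - d₁)`. Firm nonexpansiveness of `T₁` and `T₂` gives
`⟪e, d₂ - d₁⟫ ≥ ‖d₂ - d₁‖² + γ⟪d₁, c⟫`, and cocoercivity of `C` bounds `-2γ⟪d₁, c⟫` by
`γ/(2β) ‖d₂ - d₁‖²`. Expanding `‖e - (d₂ - d₁)‖²` yields the inequality, since
`(1 - α)/α = 1 - γ/(2β)`. That inequality says exactly that `R = α⁻¹ (T - (1 - α) I)` is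
nonexpansive.
-/

open scoped InnerProductSpace

section InnerProductSpace

variable {E : Type*} [NormedAddCommGroup E] [InnerProductSpace ℝ E]

def davisYinOperator (T₁ T₂ C : E → E) (γ : ℝ) (z : E) : E :=
  z - T₂ z + T₁ ((2 : ℝ) • T₂ z - z - γ • C (T₂ z))

theorem norm_sub_smul_le_of_norm_sq_le {a b : E} {α : ℝ} (hα : 0 < α)
    (h : ‖a‖ ^ 2 ≤ ‖b‖ ^ 2 - ((1 - α) / α) * ‖b - a‖ ^ 2) :
    ‖a - (1 - α) • b‖ ≤ α * ‖b‖ := by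
  have hexpand : ‖a - (1 - α) • b‖ ^ 2
      = α ^ 2 * ‖b‖ ^ 2 - (α * ‖b‖ ^ 2 - α * ‖a‖ ^ 2 - (1 - α) * ‖b - a‖ ^ 2) := by
    rw [norm_sub_sq_real, norm_sub_sq_real, real_inner_smul_right, norm_smul,
      Real.norm_eq_abs, mul_pow, sq_abs, real_inner_comm]
    ring
  have hscaled : α * ‖a‖ ^ 2 ≤ α * ‖b‖ ^ 2 - (1 - α) * ‖b - a‖ ^ 2 := by
    have h' := mul_le_mul_of_nonneg_left h hα.le
    rwa [mul_sub, ← mul_assoc, mul_div_cancel₀ _ hα.ne'] at h'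
  exact (pow_le_pow_iff_left₀ (norm_nonneg _) (by positivity) two_ne_zero).1
    (by rw [mul_pow]; linarith)

theorem exists_nonexpansive_of_norm_sq_le {T : E → E} {α : ℝ} (hα : 0 < α)
    (hT : ∀ z w, ‖T z - T w‖ ^ 2 ≤
      ‖z - w‖ ^ 2 - ((1 - α) / α) * ‖(z - T z) - (w - T w)‖ ^ 2) :
    ∃ R : E → E, (∀ x y, ‖R x - R y‖ ≤ ‖x - y‖) ∧ ∀ z, T z = (1 - α) • z + α • R z := by
  refine ⟨fun z => α⁻¹ • (T z - (1 - α) • z), fun x y => ?_, fun z => ?_⟩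
  · have h := hT x y
    rw [show (x - T x) - (y - T y) = (x - y) - (T x - T y) by abel] at h
    rw [show α⁻¹ • (T x - (1 - α) • x) - α⁻¹ • (T y - (1 - α) • y)
        = α⁻¹ • ((T x - T y) - (1 - α) • (x - y)) by module,
      norm_smul, Real.norm_eq_abs, abs_inv, abs_of_pos hα, inv_mul_le_iff₀ hα]
    exact norm_sub_smul_le_of_norm_sq_le hα h
  · rw [smul_smul, mul_inv_cancel₀ hα.ne', one_smul, add_sub_cancel]

-- Expand `0 ≤ ‖(b - a) - 2β c‖²`.
theorem neg_inner_le_norm_sub_sq_of_cocoercive {a b c : E} {β : ℝ} (hβ : 0 < β)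
    (hc : β * ‖c‖ ^ 2 ≤ ⟪c, b⟫_ℝ) : -(4 * β * ⟪a, c⟫_ℝ) ≤ ‖b - a‖ ^ 2 := by
  have hsquare : 0 ≤ ‖(b - a) - (2 * β) • c‖ ^ 2 := sq_nonneg _
  rw [norm_sub_sq_real, real_inner_smul_right, norm_smul, Real.norm_eq_abs, mul_pow, sq_abs,
    inner_sub_left, real_inner_comm c b] at hsquare
  nlinarith [mul_le_mul_of_nonneg_left hc (by positivity : (0 : ℝ) ≤ 4 * β)]

theorem norm_sub_sq_le_of_firmly_of_cocoercive {e d₁ d₂ c : E} {β γ : ℝ} (hβ : 0 < β)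
    (hγ : 0 ≤ γ) (h₁ : ‖d₁‖ ^ 2 ≤ ⟪d₁, (2 : ℝ) • d₂ - e - γ • c⟫_ℝ) (h₂ : ‖d₂‖ ^ 2 ≤ ⟪d₂, e⟫_ℝ)
    (hc : β * ‖c‖ ^ 2 ≤ ⟪c, d₂⟫_ℝ) :
    ‖e - (d₂ - d₁)‖ ^ 2 ≤ ‖e‖ ^ 2 - (1 - γ / (2 * β)) * ‖d₂ - d₁‖ ^ 2 := by
  have hfirm : ‖d₂ - d₁‖ ^ 2 + γ * ⟪d₁, c⟫_ℝ ≤ ⟪e, d₂ - d₁⟫_ℝ := by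
    rw [inner_sub_right, inner_sub_right, real_inner_smul_right, real_inner_smul_right] at h₁
    rw [norm_sub_sq_real, inner_sub_right, real_inner_comm d₂ e, real_inner_comm d₁ e,
      real_inner_comm d₁ d₂]
    linarith
  have hcoco : -(2 * γ * ⟪d₁, c⟫_ℝ) ≤ γ / (2 * β) * ‖d₂ - d₁‖ ^ 2 := by
    have h := mul_le_mul_of_nonneg_left
      (neg_inner_le_norm_sub_sq_of_cocoercive (a := d₁) hβ hc) hγ
    rw [div_mul_eq_mul_div, le_div_iff₀ (by positivity)]
    linarith
  rw [norm_sub_sq_real]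
  linarith

theorem norm_sq_davisYinOperator_sub_le {T₁ T₂ C : E → E} {β γ : ℝ} (hβ : 0 < β) (hγ : 0 ≤ γ)
    (hT₁ : ∀ x y, ‖T₁ x - T₁ y‖ ^ 2 ≤ ⟪T₁ x - T₁ y, x - y⟫_ℝ)
    (hT₂ : ∀ x y, ‖T₂ x - T₂ y‖ ^ 2 ≤ ⟪T₂ x - T₂ y, x - y⟫_ℝ)
    (hC : ∀ x y, β * ‖C x - C y‖ ^ 2 ≤ ⟪C x - C y, x - y⟫_ℝ) (z w : E) :
    let T := davisYinOperator T₁ T₂ C γ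
    ‖T z - T w‖ ^ 2 ≤ ‖z - w‖ ^ 2 - (1 - γ / (2 * β)) * ‖(z - T z) - (w - T w)‖ ^ 2 := by
  let u := (2 : ℝ) • T₂ z - z - γ • C (T₂ z)
  let v := (2 : ℝ) • T₂ w - w - γ • C (T₂ w)
  have h₁ := hT₁ u v
  rw [show u - v = (2 : ℝ) • (T₂ z - T₂ w) - (z - w) - γ • (C (T₂ z) - C (T₂ w)) by module] at h₁
  have h := norm_sub_sq_le_of_firmly_of_cocoercive hβ hγ h₁ (hT₂ z w) (hC (T₂ z) (T₂ w))
  intro T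
  have hT : T z - T w = (z - w) - ((T₂ z - T₂ w) - (T₁ u - T₁ v)) := by
    simp only [T, davisYinOperator, u, v]; abel
  have hIT : (z - T z) - (w - T w) = (T₂ z - T₂ w) - (T₁ u - T₁ v) := by
    simp only [T, davisYinOperator, u, v]; abel
  rwa [hT, hIT]

end InnerProductSpace

theorem three_operator_averaged_general
    {H : Type*} [NormedAddCommGroup H] [InnerProductSpace ℝ H]
    (T₁ T₂ : H → H) (C : H → H) (β γ : ℝ)
    (hβ : 0 < β) (hγ : γ ∈ Set.Ioo 0 (2 * β))
    (hT₁ : ∀ x y, ‖T₁ x - T₁ y‖ ^ 2 ≤ ⟪T₁ x - T₁ y, x - y⟫_ℝ)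
    (hT₂ : ∀ x y, ‖T₂ x - T₂ y‖ ^ 2 ≤ ⟪T₂ x - T₂ y, x - y⟫_ℝ)
    (hC : ∀ x y, β * ‖C x - C y‖ ^ 2 ≤ ⟪C x - C y, x - y⟫_ℝ)
    (T : H → H)
    (hT : ∀ z, T z = z - T₂ z + T₁ ((2 : ℝ) • T₂ z - z - γ • C (T₂ z)))
    (α : ℝ) (hα : α = 2 * β / (4 * β - γ)) :
    α < 1 ∧
    (∀ z w : H, ‖T z - T w‖ ^ 2 ≤
      ‖z - w‖ ^ 2 - ((1 - α) / α) * ‖(z - T z) - (w - T w)‖ ^ 2) ∧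
    ∃ R : H → H, (∀ x y, ‖R x - R y‖ ≤ ‖x - y‖) ∧
      ∀ z, T z = (1 - α) • z + α • R z := by
  obtain ⟨hγ₀, hγβ⟩ := hγ
  have hden : 0 < 4 * β - γ := by linarith
  have hα₀ : 0 < α := hα ▸ by positivity
  have hcoeff : (1 - α) / α = 1 - γ / (2 * β) := by
    rw [hα, one_sub_div hden.ne', div_div_div_cancel_right₀ hden.ne', sub_div' (by positivity)]
    ring
  have hTeq : T = davisYinOperator T₁ T₂ C γ := funext hT
  have hineq : ∀ z w : H, ‖T z - T w‖ ^ 2 ≤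
      ‖z - w‖ ^ 2 - ((1 - α) / α) * ‖(z - T z) - (w - T w)‖ ^ 2 := by
    rw [hcoeff, hTeq]
    exact norm_sq_davisYinOperator_sub_le hβ hγ₀.le hT₁ hT₂ hC
  refine ⟨?_, hineq, exists_nonexpansive_of_norm_sq_le hα₀ hineq⟩
  rw [hα, div_lt_one hden]
  linarith

/-- Averagedness of `T = I - T₂ + T₁∘(2T₂ - I - γC∘T₂)` with `T₁, T₂` firmly
nonexpansive and `C` β-cocoercive, with averaging coefficient `α = 2β/(4β-γ) < 1`. -/
theorem three_operator_averaged
    {H : Type*} [NormedAddCommGroup H] [InnerProductSpace ℝ H] [CompleteSpace H]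
    (T₁ T₂ : H → H) (C : H → H) (β γ : ℝ)
    (hβ : 0 < β) (hγ : γ ∈ Set.Ioo 0 (2 * β))
    (hT₁ : ∀ x y, ‖T₁ x - T₁ y‖ ^ 2 ≤ ⟪T₁ x - T₁ y, x - y⟫_ℝ)
    (hT₂ : ∀ x y, ‖T₂ x - T₂ y‖ ^ 2 ≤ ⟪T₂ x - T₂ y, x - y⟫_ℝ)
    (hC : ∀ x y, β * ‖C x - C y‖ ^ 2 ≤ ⟪C x - C y, x - y⟫_ℝ)
    (T : H → H)
    (hT : ∀ z, T z = z - T₂ z + T₁ ((2 : ℝ) • T₂ z - z - γ • C (T₂ z)))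
    (α : ℝ) (hα : α = 2 * β / (4 * β - γ)) :
    α < 1 ∧
    (∀ z w : H, ‖T z - T w‖ ^ 2 ≤
      ‖z - w‖ ^ 2 - ((1 - α) / α) * ‖(z - T z) - (w - T w)‖ ^ 2) ∧
    ∃ R : H → H, (∀ x y, ‖R x - R y‖ ≤ ‖x - y‖) ∧
      ∀ z, T z = (1 - α) • z + α • R z :=
  three_operator_averaged_general T₁ T₂ C β γ hβ hγ hT₁ hT₂ hC T hT α hα
end

section
/- Let H be a Hilbert space, T₂ : H → H firmly nonexpansive, and C : H → H β-cocoercive. For ε ∈ (0,1) and γ ∈ (0, 2βε), let ᾱ := 1/(2−ε) and T := I − T₂ + T₁∘(2T₂ − I − γC∘T₂) with T₁ firmly nonexpansive. Then for all z, w ∈ H: ‖Tz − Tw‖² ≤ ‖z−w‖² − ((1−ᾱ)/ᾱ)‖(I−T)z − (I−T)w‖² − γ(2β − γ/ε)‖C(T₂z) − C(T₂w)‖². -/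
open scoped InnerProductSpace

/-!
Write `a = z - w`, `b = T₂ z - T₂ w`, `c` for the increment of `T₁` and `d = C (T₂ z) - C (T₂ w)`,
so that `T z - T w = a - b + c` and `(I - T) z - (I - T) w = b - c`. Firm nonexpansiveness of
`T₂` and `T₁` gives the Davis–Yin estimate `‖a - b + c‖² ≤ ‖a‖² - ‖b - c‖² - 2γ⟪c, d⟫`.
Splitting `-⟪c, d⟫ = ⟪b - c, d⟫ - ⟪b, d⟫`, cocoercivity bounds the second term by `-β‖d‖²` and
Young's inequality with weight `ε` bounds the first by `ε‖b - c‖² + (γ²/ε)‖d‖²`;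
finally `(1 - ᾱ)/ᾱ = 1 - ε`.
-/
section

variable {H : Type*} [NormedAddCommGroup H] [InnerProductSpace ℝ H]

theorem two_mul_inner_le_mul_norm_sq_add_div {ε : ℝ} (hε : 0 < ε) (x y : H) :
    2 * ⟪x, y⟫_ℝ ≤ ε * ‖x‖ ^ 2 + ‖y‖ ^ 2 / ε := by
  have hsq : 0 ≤ ‖ε • x - y‖ ^ 2 := sq_nonneg _
  rw [norm_sub_sq_real, norm_smul, real_inner_smul_left, Real.norm_of_nonneg hε.le] at hsq
  refine le_of_mul_le_mul_left ?_ hε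
  rw [mul_add, mul_div_cancel₀ _ hε.ne']
  linarith

theorem norm_sub_sub_add_sq_le {a b c e : H} (hb : ‖b‖ ^ 2 ≤ ⟪b, a⟫_ℝ)
    (hc : ‖c‖ ^ 2 ≤ ⟪c, (2 : ℝ) • b - a - e⟫_ℝ) :
    ‖a - b + c‖ ^ 2 ≤ ‖a‖ ^ 2 - ‖b - c‖ ^ 2 - 2 * ⟪c, e⟫_ℝ := by
  rw [sub_add, norm_sub_sq_real, norm_sub_sq_real, inner_sub_right]
  rw [inner_sub_right, inner_sub_right, real_inner_smul_right] at hc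
  rw [real_inner_comm a b] at hb
  rw [real_inner_comm b c, real_inner_comm a c] at hc
  linarith

theorem neg_two_mul_inner_smul_le {β γ ε : ℝ} (hγ : 0 ≤ γ) (hε : 0 < ε) {b c d : H}
    (hd : β * ‖d‖ ^ 2 ≤ ⟪d, b⟫_ℝ) :
    -(2 * ⟪c, γ • d⟫_ℝ) ≤ ε * ‖b - c‖ ^ 2 - γ * (2 * β - γ / ε) * ‖d‖ ^ 2 := by
  have hyoung := two_mul_inner_le_mul_norm_sq_add_div hε (b - c) (γ • d)
  rw [inner_sub_left, norm_smul, mul_pow, Real.norm_eq_abs, sq_abs,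
    real_inner_smul_right, real_inner_smul_right, real_inner_comm d b] at hyoung
  rw [real_inner_smul_right]
  have hcoc : γ * (β * ‖d‖ ^ 2) ≤ γ * ⟪d, b⟫_ℝ := mul_le_mul_of_nonneg_left hd hγ
  have hdiv : γ ^ 2 * ‖d‖ ^ 2 / ε = γ * (γ / ε) * ‖d‖ ^ 2 := by ring
  linarith

theorem norm_sub_sub_add_sq_le_of_cocoercive {β γ ε : ℝ} (hγ : 0 ≤ γ) (hε : 0 < ε)
    {a b c d : H} (hb : ‖b‖ ^ 2 ≤ ⟪b, a⟫_ℝ) (hc : ‖c‖ ^ 2 ≤ ⟪c, (2 : ℝ) • b - a - γ • d⟫_ℝ)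
    (hd : β * ‖d‖ ^ 2 ≤ ⟪d, b⟫_ℝ) :
    ‖a - b + c‖ ^ 2 ≤
      ‖a‖ ^ 2 - (1 - ε) * ‖b - c‖ ^ 2 - γ * (2 * β - γ / ε) * ‖d‖ ^ 2 := by
  have hfirm := norm_sub_sub_add_sq_le hb hc
  have hcross := neg_two_mul_inner_smul_le (c := c) hγ hε hd
  linarith

end

theorem three_operator_averaged_strengthened_general
    {H : Type*} [NormedAddCommGroup H] [InnerProductSpace ℝ H]
    (T₁ T₂ : H → H) (C : H → H) (β γ ε : ℝ)
    (hε : ε ∈ Set.Ioo (0 : ℝ) 1) (hγ : γ ∈ Set.Ioo 0 (2 * β * ε))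
    (hT₁ : ∀ x y, ‖T₁ x - T₁ y‖ ^ 2 ≤ ⟪T₁ x - T₁ y, x - y⟫_ℝ)
    (hT₂ : ∀ x y, ‖T₂ x - T₂ y‖ ^ 2 ≤ ⟪T₂ x - T₂ y, x - y⟫_ℝ)
    (hC : ∀ x y, β * ‖C x - C y‖ ^ 2 ≤ ⟪C x - C y, x - y⟫_ℝ)
    (T : H → H)
    (hT : ∀ z, T z = z - T₂ z + T₁ ((2 : ℝ) • T₂ z - z - γ • C (T₂ z)))
    (α : ℝ) (hα : α = 1 / (2 - ε)) :
    ∀ z w : H, ‖T z - T w‖ ^ 2 ≤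
      ‖z - w‖ ^ 2 - ((1 - α) / α) * ‖(z - T z) - (w - T w)‖ ^ 2
        - γ * (2 * β - γ / ε) * ‖C (T₂ z) - C (T₂ w)‖ ^ 2 := by
  intro z w
  obtain ⟨hε₀, hε₁⟩ := hε
  have hα' : (1 - α) / α = 1 - ε := by
    rw [hα]
    field_simp [show (2 : ℝ) - ε ≠ 0 by linarith]
    ring
  set u := (2 : ℝ) • T₂ z - z - γ • C (T₂ z)
  set v := (2 : ℝ) • T₂ w - w - γ • C (T₂ w)
  have hTzw : T z - T w = (z - w) - (T₂ z - T₂ w) + (T₁ u - T₁ v) := by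
    rw [hT z, hT w]; abel
  have hresid : (z - T z) - (w - T w) = (T₂ z - T₂ w) - (T₁ u - T₁ v) := by
    rw [hT z, hT w]; abel
  have huv : u - v = (2 : ℝ) • (T₂ z - T₂ w) - (z - w) - γ • (C (T₂ z) - C (T₂ w)) := by
    simp only [u, v, smul_sub]; abel
  rw [hTzw, hresid, hα']
  refine norm_sub_sub_add_sq_le_of_cocoercive hγ.1.le hε₀ (hT₂ z w) ?_ (hC (T₂ z) (T₂ w))
  rw [← huv]
  exact hT₁ u v

/-- Strengthened averagedness inequality: for `ε ∈ (0,1)`, `γ ∈ (0, 2βε)` and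
`ᾱ = 1/(2-ε)`, the operator `T = I - T₂ + T₁∘(2T₂ - I - γC∘T₂)` satisfies a
contraction-type inequality with an extra cocoercivity term. -/
theorem three_operator_averaged_strengthened
    {H : Type*} [NormedAddCommGroup H] [InnerProductSpace ℝ H] [CompleteSpace H]
    (T₁ T₂ : H → H) (C : H → H) (β γ ε : ℝ)
    (hβ : 0 < β) (hε : ε ∈ Set.Ioo (0 : ℝ) 1) (hγ : γ ∈ Set.Ioo 0 (2 * β * ε))
    (hT₁ : ∀ x y, ‖T₁ x - T₁ y‖ ^ 2 ≤ ⟪T₁ x - T₁ y, x - y⟫_ℝ)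
    (hT₂ : ∀ x y, ‖T₂ x - T₂ y‖ ^ 2 ≤ ⟪T₂ x - T₂ y, x - y⟫_ℝ)
    (hC : ∀ x y, β * ‖C x - C y‖ ^ 2 ≤ ⟪C x - C y, x - y⟫_ℝ)
    (T : H → H)
    (hT : ∀ z, T z = z - T₂ z + T₁ ((2 : ℝ) • T₂ z - z - γ • C (T₂ z)))
    (α : ℝ) (hα : α = 1 / (2 - ε)) :
    ∀ z w : H, ‖T z - T w‖ ^ 2 ≤
      ‖z - w‖ ^ 2 - ((1 - α) / α) * ‖(z - T z) - (w - T w)‖ ^ 2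
        - γ * (2 * β - γ / ε) * ‖C (T₂ z) - C (T₂ w)‖ ^ 2 :=
  three_operator_averaged_strengthened_general T₁ T₂ C β γ ε hε hγ hT₁ hT₂ hC T hT α hα
end

section
/- Under the assumptions of the main convergence theorem (T defined from maximally monotone A, B and β-cocoercive C with ε ∈ (0,1), γ ∈ (0, 2βε), α = 1/(2−ε), relaxations λ_k ∈ (0, 1/α), z^{k+1} = (1−λ_k)z^k + λ_k T z^k), let z* ∈ Fix T, x* = J_{γB}(z*), and x_B^k = J_{γB}(z^k). If inf_k λ_k > 0, then Σ_{k=0}^∞ λ_k ‖C x_B^k − C x*‖² ≤ ‖z⁰ − z*‖²/(γ(2β − γ/ε)); in particular C x_B^k → C x* strongly. -/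
open Filter
open scoped InnerProductSpace

lemma scalar_core (β ε γ lam np nb na nc pa pb ab ca cb : ℝ)
    (hε : 0 < ε) (hγ : 0 < γ) (hlam : 0 < lam) (hlam2 : lam ≤ 2 - ε)
    (hnab : 0 ≤ na - 2*ab + nb)
    (h1 : 0 ≤ pb - nb)
    (h2 : 0 ≤ 2*ab - pa - γ*ca - na)
    (h3 : β*nc ≤ cb)
    (h4 : 0 ≤ ε^2*(na - 2*ab + nb) + 2*ε*γ*(ca - cb) + γ^2*nc) :
    γ*(2*β - γ/ε)*(lam*nc) ≤ np - (np + 2*lam*(pa - pb) + lam^2*(na - 2*ab + nb)) := by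
  refine le_of_mul_le_mul_left ?_ hε
  have key : ε * (γ*(2*β - γ/ε)*(lam*nc)) = γ*(2*β*ε - γ)*(lam*nc) := by
    field_simp
  rw [key]
  have P1 : 0 ≤ (2*lam*ε) * (pb - nb) := mul_nonneg (by positivity) h1
  have P2 : 0 ≤ (2*lam*ε) * (2*ab - pa - γ*ca - na) := mul_nonneg (by positivity) h2
  have P3 : 0 ≤ (2*lam*γ*ε) * (cb - β*nc) := mul_nonneg (by positivity) (by linarith)
  have P4 : 0 ≤ lam * (ε^2*(na - 2*ab + nb) + 2*ε*γ*(ca - cb) + γ^2*nc) :=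
    mul_nonneg hlam.le h4
  have P5 : 0 ≤ (lam*ε*(2 - ε - lam)) * (na - 2*ab + nb) :=
    mul_nonneg (mul_nonneg (mul_nonneg hlam.le hε.le) (by linarith)) hnab
  nlinarith [P1, P2, P3, P4, P5]

lemma one_step {H : Type*} [NormedAddCommGroup H] [InnerProductSpace ℝ H]
    (A B : H → Set H) (C : H → H) (β ε γ : ℝ)
    (hε : ε ∈ Set.Ioo (0 : ℝ) 1) (hγ0 : 0 < γ)
    (hAmono : ∀ x y u v, u ∈ A x → v ∈ A y → 0 ≤ ⟪u - v, x - y⟫_ℝ)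
    (hBmono : ∀ x y u v, u ∈ B x → v ∈ B y → 0 ≤ ⟪u - v, x - y⟫_ℝ)
    (hC : ∀ x y, β * ‖C x - C y‖ ^ 2 ≤ ⟪C x - C y, x - y⟫_ℝ)
    (JA JB : H → H)
    (hJA : ∀ z x, JA z = x ↔ γ⁻¹ • (z - x) ∈ A x)
    (hJB : ∀ z x, JB z = x ↔ γ⁻¹ • (z - x) ∈ B x)
    (T : H → H)
    (hT : ∀ z, T z = z - JB z + JA ((2 : ℝ) • JB z - z - γ • C (JB z)))
    (zs : H) (hfix : T zs = zs) (lam : ℝ) (hl0 : 0 < lam) (hl1 : lam ≤ 2 - ε) (w : H) :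
    γ*(2*β - γ/ε) * (lam * ‖C (JB w) - C (JB zs)‖^2)
      ≤ ‖w - zs‖^2 - ‖((1 - lam) • w + lam • T w) - zs‖^2 := by
  have hγinv : (0:ℝ) < γ⁻¹ := inv_pos.mpr hγ0
  -- fixed point gives JA at the star point
  have hfixA : JA ((2 : ℝ) • JB zs - zs - γ • C (JB zs)) = JB zs := by
    have h2 := (hT zs).symm.trans hfix
    have h3 : JA ((2:ℝ) • JB zs - zs - γ • C (JB zs)) - JB zs
        = (zs - JB zs + JA ((2:ℝ) • JB zs - zs - γ • C (JB zs))) - zs := by abel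
    rw [h2, sub_self] at h3
    exact sub_eq_zero.mp h3
  set xs := JB zs with hxs
  set wa := (2 : ℝ) • JB w - w - γ • C (JB w) with hwa
  set ws := (2 : ℝ) • xs - zs - γ • C xs with hws
  -- memberships
  have mB1 : γ⁻¹ • (w - JB w) ∈ B (JB w) := (hJB w (JB w)).mp rfl
  have mB2 : γ⁻¹ • (zs - xs) ∈ B xs := (hJB zs xs).mp rfl
  have mA1 : γ⁻¹ • (wa - JA wa) ∈ A (JA wa) := (hJA wa (JA wa)).mp rfl
  have mA2 : γ⁻¹ • (ws - xs) ∈ A xs := (hJA ws xs).mp hfixA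
  have hB0 := hBmono _ _ _ _ mB1 mB2
  have hA0 := hAmono _ _ _ _ mA1 mA2
  set p := w - zs with hp
  set b := JB w - xs with hb
  set a := JA wa - xs with ha
  set c := C (JB w) - C xs with hc
  -- scalar abbreviations
  -- inequality from B
  have h1 : 0 ≤ ⟪p, b⟫_ℝ - ‖b‖^2 := by
    have e1 : γ⁻¹ • (w - JB w) - γ⁻¹ • (zs - xs) = γ⁻¹ • (p - b) := by
      rw [← smul_sub]; congr 1; rw [hp, hb]; abel
    rw [e1, real_inner_smul_left] at hB0
    have h := nonneg_of_mul_nonneg_right hB0 hγinv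
    rwa [inner_sub_left, real_inner_self_eq_norm_sq] at h
  -- inequality from A
  have h2 : 0 ≤ 2*⟪a, b⟫_ℝ - ⟪p, a⟫_ℝ - γ*⟪c, a⟫_ℝ - ‖a‖^2 := by
    have e2 : γ⁻¹ • (wa - JA wa) - γ⁻¹ • (ws - xs)
        = γ⁻¹ • ((2:ℝ) • b - p - γ • c - a) := by
      rw [← smul_sub]; congr 1
      rw [hwa, hws, hp, hb, ha, hc, smul_sub, smul_sub]; abel
    rw [e2, real_inner_smul_left] at hA0
    have h := nonneg_of_mul_nonneg_right hA0 hγinv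
    rw [inner_sub_left, inner_sub_left, inner_sub_left, real_inner_smul_left,
      real_inner_smul_left, real_inner_self_eq_norm_sq] at h
    have hcomm := real_inner_comm a b
    have hcomm' := real_inner_comm b a
    linarith [hcomm, hcomm']
  -- cocoercivity
  have h3 : β*‖c‖^2 ≤ ⟪c, b⟫_ℝ := by
    have := hC (JB w) (JB zs)
    rw [← hxs, ← hb, ← hc] at this
    exact this
  -- Young / square nonneg
  have hab : ‖a - b‖^2 = ‖a‖^2 - 2*⟪a, b⟫_ℝ + ‖b‖^2 := norm_sub_sq_real a b
  have h4 : 0 ≤ ε^2*(‖a‖^2 - 2*⟪a, b⟫_ℝ + ‖b‖^2) + 2*ε*γ*(⟪c, a⟫_ℝ - ⟪c, b⟫_ℝ)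
      + γ^2*‖c‖^2 := by
    have hsq : (0:ℝ) ≤ ‖ε • (a - b) + γ • c‖^2 := sq_nonneg _
    rw [norm_add_sq_real, norm_smul, norm_smul, real_inner_smul_left,
      real_inner_smul_right, inner_sub_left] at hsq
    have hab2 : (‖ε‖ * ‖a - b‖)^2 = ε^2*(‖a‖^2 - 2*⟪a, b⟫_ℝ + ‖b‖^2) := by
      rw [mul_pow, hab, Real.norm_eq_abs, sq_abs]
    have hgc : (‖γ‖ * ‖c‖)^2 = γ^2*‖c‖^2 := by
      rw [mul_pow, Real.norm_eq_abs, sq_abs]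
    rw [real_inner_comm a c, real_inner_comm b c]
    linarith [hsq, hab2, hgc]
  have hnab : 0 ≤ ‖a‖^2 - 2*⟪a, b⟫_ℝ + ‖b‖^2 := by
    have := sq_nonneg ‖a - b‖
    rw [norm_sub_sq_real] at this; linarith
  -- rewrite the iterate difference
  have egoal : ((1 - lam) • w + lam • T w) - zs = p + lam • (a - b) := by
    rw [hT w, ← hwa, hp, ha, hb]
    rw [sub_smul, one_smul, smul_sub, smul_sub, smul_add, smul_sub, smul_sub]
    abel
  rw [egoal]
  have enorm : ‖p + lam • (a - b)‖^2
      = ‖p‖^2 + 2*lam*(⟪p, a⟫_ℝ - ⟪p, b⟫_ℝ) + lam^2*(‖a‖^2 - 2*⟪a, b⟫_ℝ + ‖b‖^2) := by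
    rw [norm_add_sq_real, real_inner_smul_right, inner_sub_right, norm_smul,
      mul_pow, Real.norm_eq_abs, sq_abs, hab]
    ring
  rw [enorm]
  exact scalar_core β ε γ lam (‖p‖^2) (‖b‖^2) (‖a‖^2) (‖c‖^2)
    (⟪p, a⟫_ℝ) (⟪p, b⟫_ℝ) (⟪a, b⟫_ℝ) (⟪c, a⟫_ℝ) (⟪c, b⟫_ℝ)
    hε.1 hγ0 hl0 hl1 hnab h1 h2 h3 h4

/-- Summability of the cocoercive-gradient errors along the iteration and strong
convergence `C x_B^k → C x*`. -/
theorem gradient_sum_finite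
    {H : Type*} [NormedAddCommGroup H] [InnerProductSpace ℝ H] [CompleteSpace H]
    (A B : H → Set H) (C : H → H) (β ε γ α : ℝ)
    (hβ : 0 < β) (hε : ε ∈ Set.Ioo (0 : ℝ) 1) (hγ : γ ∈ Set.Ioo 0 (2 * β * ε))
    (hα : α = 1 / (2 - ε))
    (hAmono : ∀ x y u v, u ∈ A x → v ∈ A y → 0 ≤ ⟪u - v, x - y⟫_ℝ)
    (hBmono : ∀ x y u v, u ∈ B x → v ∈ B y → 0 ≤ ⟪u - v, x - y⟫_ℝ)
    (hC : ∀ x y, β * ‖C x - C y‖ ^ 2 ≤ ⟪C x - C y, x - y⟫_ℝ)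
    (JA JB : H → H)
    (hJA : ∀ z x, JA z = x ↔ γ⁻¹ • (z - x) ∈ A x)
    (hJB : ∀ z x, JB z = x ↔ γ⁻¹ • (z - x) ∈ B x)
    (T : H → H)
    (hT : ∀ z, T z = z - JB z + JA ((2 : ℝ) • JB z - z - γ • C (JB z)))
    (lam : ℕ → ℝ) (hlam : ∀ k, lam k ∈ Set.Ioo 0 (1 / α))
    (hinf : ∃ δ > (0 : ℝ), ∀ k, δ ≤ lam k)
    (z : ℕ → H)
    (hrec : ∀ k, z (k + 1) = (1 - lam k) • z k + lam k • T (z k))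
    (zs : H) (hfix : T zs = zs) :
    Summable (fun k => lam k * ‖C (JB (z k)) - C (JB zs)‖ ^ 2) ∧
    (∑' k, lam k * ‖C (JB (z k)) - C (JB zs)‖ ^ 2) ≤
      ‖z 0 - zs‖ ^ 2 / (γ * (2 * β - γ / ε)) ∧
    Tendsto (fun k => C (JB (z k))) atTop (nhds (C (JB zs))) := by
  have hε2 : (0:ℝ) < 2 - ε := by linarith [hε.2]
  have hinva : 1 / α = 2 - ε := by rw [hα, one_div_one_div]
  have hl1 : ∀ k, lam k ≤ 2 - ε := fun k => by
    have := (hlam k).2; rw [hinva] at this; linarith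
  set D : ℝ := γ * (2 * β - γ / ε) with hD
  have hDpos : 0 < D := by
    apply mul_pos hγ.1
    have : γ / ε < 2 * β := (div_lt_iff₀ hε.1).mpr (by linarith [hγ.2])
    linarith
  set f : ℕ → ℝ := fun k => lam k * ‖C (JB (z k)) - C (JB zs)‖ ^ 2 with hf
  set g : ℕ → ℝ := fun k => ‖z k - zs‖ ^ 2 with hg
  have hf0 : ∀ k, 0 ≤ f k := fun k => mul_nonneg (hlam k).1.le (sq_nonneg _)
  have step : ∀ k, D * f k ≤ g k - g (k + 1) := by
    intro k
    have h := one_step A B C β ε γ hε hγ.1 hAmono hBmono hC JA JB hJA hJB T hT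
      zs hfix (lam k) (hlam k).1 (hl1 k) (z k)
    rw [← hrec k] at h
    exact h
  have hbound : ∀ n, ∑ i ∈ Finset.range n, f i ≤ g 0 / D := by
    intro n
    have tel : ∑ i ∈ Finset.range n, (g i - g (i + 1)) = g 0 - g n :=
      Finset.sum_range_sub' g n
    have hsum : ∑ i ∈ Finset.range n, D * f i ≤ ∑ i ∈ Finset.range n, (g i - g (i + 1)) :=
      Finset.sum_le_sum fun i _ => step i
    have hgn : 0 ≤ g n := sq_nonneg _
    have h1 : D * ∑ i ∈ Finset.range n, f i ≤ g 0 := by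
      rw [Finset.mul_sum]; linarith
    rw [le_div_iff₀ hDpos, mul_comm]
    exact h1
  have hsummable : Summable f := summable_of_sum_range_le hf0 hbound
  refine ⟨hsummable, Real.tsum_le_of_sum_range_le hf0 hbound, ?_⟩
  -- convergence
  obtain ⟨δ, hδ, hδle⟩ := hinf
  have hf_to : Tendsto f atTop (nhds 0) := hsummable.tendsto_atTop_zero
  have hsq_to : Tendsto (fun k => ‖C (JB (z k)) - C (JB zs)‖ ^ 2) atTop (nhds 0) := by
    have hle : ∀ k, ‖C (JB (z k)) - C (JB zs)‖ ^ 2 ≤ δ⁻¹ * f k := by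
      intro k
      rw [le_inv_mul_iff₀ hδ]
      exact mul_le_mul_of_nonneg_right (hδle k) (sq_nonneg _)
    have hg_to : Tendsto (fun k => δ⁻¹ * f k) atTop (nhds 0) := by
      simpa using hf_to.const_mul δ⁻¹
    exact squeeze_zero (fun k => sq_nonneg _) hle hg_to
  have hnorm_to : Tendsto (fun k => ‖C (JB (z k)) - C (JB zs)‖) atTop (nhds 0) := by
    have := (Real.continuous_sqrt.tendsto 0).comp hsq_to
    simpa [Function.comp_def, Real.sqrt_sq (norm_nonneg _)] using this
  rw [tendsto_iff_norm_sub_tendsto_zero]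
  exact hnorm_to
end

section
/- Let T : H → H be α-averaged with Fix T ≠ ∅, z* ∈ Fix T, and let z^{k+1} = (1−λ_k)z^k + λ_k T z^k with τ_k := (1 − λ_k/α)(λ_k/α) and τ := inf_k τ_k > 0. Then for all k ≥ 0: ‖T z^k − z^k‖² ≤ ‖z⁰ − z*‖²/(τ(k+1)), and moreover ‖T z^k − z^k‖² = o(1/(k+1)). -/
open Filter
open scoped RealInnerProductSpace

private lemma expand_sq {H : Type*} [NormedAddCommGroup H] [InnerProductSpace ℝ H]
    (a b : H) (c : ℝ) : ‖a + c • b‖ ^ 2 = ‖a‖^2 + 2*c*⟪a,b⟫ + c^2*‖b‖^2 := by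
  rw [norm_add_sq_real, real_inner_smul_right, norm_smul]
  simp [mul_pow, sq_abs]; ring

private lemma le_of_sq_le_sq' (a b : ℝ) (ha : 0 ≤ a) (hb : 0 ≤ b) (h : a^2 ≤ b^2) : a ≤ b := by
  nlinarith

/-- Fixed-point residual rate for the relaxed iteration of an α-averaged
operator: `‖Tz^k - z^k‖² ≤ ‖z⁰ - z*‖²/(τ(k+1))` and `‖Tz^k - z^k‖² = o(1/(k+1))`. -/
theorem FPR_rate
    {H : Type*} [NormedAddCommGroup H] [InnerProductSpace ℝ H] [CompleteSpace H]
    (T : H → H) (α : ℝ) (hα : α ∈ Set.Ioo (0 : ℝ) 1)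
    (havg : ∀ z w, ‖T z - T w‖ ^ 2 ≤
      ‖z - w‖ ^ 2 - ((1 - α) / α) * ‖(z - T z) - (w - T w)‖ ^ 2)
    (lam : ℕ → ℝ) (hlam : ∀ k, lam k ∈ Set.Ioo 0 (1 / α))
    (τ : ℝ) (hτ : 0 < τ)
    (hτle : ∀ k, τ ≤ (1 - lam k / α) * (lam k / α))
    (z : ℕ → H)
    (hrec : ∀ k, z (k + 1) = (1 - lam k) • z k + lam k • T (z k))
    (zs : H) (hfix : T zs = zs) :
    (∀ k : ℕ, ‖T (z k) - z k‖ ^ 2 ≤ ‖z 0 - zs‖ ^ 2 / (τ * (k + 1))) ∧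
    Tendsto (fun k : ℕ => ((k : ℝ) + 1) * ‖T (z k) - z k‖ ^ 2) atTop (nhds 0) := by
  obtain ⟨hα0, hα1⟩ := hα
  have he_nonneg : ∀ k, (0:ℝ) ≤ ‖T (z k) - z k‖ ^ 2 := fun k => pow_nonneg (norm_nonneg _) 2
  have hD0 : (0:ℝ) ≤ ‖z 0 - zs‖ ^ 2 := pow_nonneg (norm_nonneg _) 2
  -- key inner product bound from averagedness
  have hip : ∀ x w, 2 * ⟪x - w, (x - T x) - (w - T w)⟫ ≥
      (1/α) * ‖(x - T x) - (w - T w)‖^2 := by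
    intro x w
    have h := havg x w
    have hexp : T x - T w = (x - w) + (-1 : ℝ) • ((x - T x) - (w - T w)) := by
      module
    rw [hexp, expand_sq] at h
    have hdiv : (1 - α)/α = 1/α - 1 := by field_simp
    rw [hdiv] at h
    nlinarith [h]
  -- descent inequality
  have hA : ∀ k, ‖z (k+1) - zs‖^2 ≤ ‖z k - zs‖^2 - τ * ‖T (z k) - z k‖^2 := by
    intro k
    obtain ⟨hl0, hl1⟩ := hlam k
    have h1 : z (k+1) - zs = (z k - zs) + lam k • (T (z k) - z k) := by
      rw [hrec k]; module
    have h2 := hip (z k) zs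
    rw [hfix, sub_self, sub_zero] at h2
    have h2' : 2 * ⟪z k - zs, T (z k) - z k⟫ ≤ -(1/α) * ‖T (z k) - z k‖^2 := by
      have hn : ‖z k - T (z k)‖ = ‖T (z k) - z k‖ := norm_sub_rev _ _
      have hi : ⟪z k - zs, T (z k) - z k⟫ = - ⟪z k - zs, z k - T (z k)⟫ := by
        rw [← inner_neg_right]
        congr 1
        abel
      rw [hi, ← hn]
      linarith [h2]
    rw [h1, expand_sq]
    have hl2 : lam k / α < 1 := by
      by_contra hc
      push_neg at hc
      have hd0 : 0 < lam k / α := div_pos hl0 hα0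
      have : (1 - lam k / α) * (lam k / α) ≤ 0 :=
        mul_nonpos_of_nonpos_of_nonneg (by linarith) hd0.le
      linarith [hτle k]
    have hkey : τ ≤ lam k / α - lam k ^ 2 := by
      have h4 : lam k ^ 2 ≤ (lam k / α)^2 := by
        apply pow_le_pow_left₀ (le_of_lt hl0)
        rw [le_div_iff₀ hα0]; nlinarith
      have h5 : (1 - lam k / α) * (lam k / α) = lam k / α - (lam k / α)^2 := by ring
      have h6 := hτle k
      rw [h5] at h6
      linarith
    have hnn := he_nonneg k
    have a1 := mul_le_mul_of_nonneg_left h2' (le_of_lt hl0)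
    have a2 := mul_le_mul_of_nonneg_right hkey hnn
    have e1 : lam k * (-(1/α) * ‖T (z k) - z k‖^2)
        = -(lam k/α * ‖T (z k) - z k‖^2) := by ring
    have e2 : (lam k / α - lam k ^ 2) * ‖T (z k) - z k‖^2
        = lam k/α * ‖T (z k) - z k‖^2 - lam k^2 * ‖T (z k) - z k‖^2 := by ring
    rw [e1] at a1; rw [e2] at a2
    linarith
  -- auxiliary operator R = I + α⁻¹ (T - I)
  set R : H → H := fun x => x + α⁻¹ • (T x - x) with hRdef
  have hRsub : ∀ x, T x - x = α • (R x - x) := by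
    intro x
    simp only [hRdef]
    rw [add_sub_cancel_left, smul_smul, mul_inv_cancel₀ (ne_of_gt hα0), one_smul]
  have hRne : ∀ x y, ‖R x - R y‖ ≤ ‖x - y‖ := by
    intro x y
    have h6 : (1/α) * ‖(x - T x) - (y - T y)‖^2 ≤
        2 * ⟪x - y, (x - T x) - (y - T y)⟫ := hip x y
    have heq : R x - R y = (x - y) + (-α⁻¹ : ℝ) • ((x - T x) - (y - T y)) := by
      simp only [hRdef]; module
    have hαinv : (0:ℝ) < α⁻¹ := inv_pos.mpr hα0
    have h5 : ‖R x - R y‖^2 ≤ ‖x - y‖^2 := by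
      rw [heq, expand_sq]
      have h9 := mul_le_mul_of_nonneg_left h6 hαinv.le
      have h8 : α⁻¹ * (1/α) = (-α⁻¹)^2 := by rw [one_div]; ring
      nlinarith [h9]
    exact le_of_sq_le_sq' _ _ (norm_nonneg _) (norm_nonneg _) h5
  -- monotonicity of the residual
  have hB : ∀ k, ‖T (z (k+1)) - z (k+1)‖ ≤ ‖T (z k) - z k‖ := by
    intro k
    obtain ⟨hl0, hl1⟩ := hlam k
    set μ : ℝ := lam k * α with hμ
    have hμ0 : 0 < μ := mul_pos hl0 hα0
    have hμ1 : μ ≤ 1 := by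
      rw [hμ]
      have h := mul_lt_mul_of_pos_right hl1 hα0
      rw [one_div, inv_mul_cancel₀ (ne_of_gt hα0)] at h
      linarith
    have hy : z (k+1) = z k + μ • (R (z k) - z k) := by
      rw [hrec k, hμ]
      calc (1 - lam k) • z k + lam k • T (z k)
          = z k + lam k • (T (z k) - z k) := by module
        _ = z k + lam k • (α • (R (z k) - z k)) := by rw [← hRsub]
        _ = z k + (lam k * α) • (R (z k) - z k) := by rw [smul_smul]
    have hdecomp : R (z (k+1)) - z (k+1)
        = (R (z (k+1)) - R (z k)) + (1 - μ) • (R (z k) - z k) := by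
      rw [hy]; module
    have hstep1 : ‖R (z (k+1)) - z (k+1)‖ ≤
        ‖R (z (k+1)) - R (z k)‖ + (1 - μ) * ‖R (z k) - z k‖ := by
      rw [hdecomp]
      refine le_trans (norm_add_le _ _) ?_
      rw [norm_smul, Real.norm_eq_abs, abs_of_nonneg (by linarith)]
    have hstep2 : ‖R (z (k+1)) - R (z k)‖ ≤ μ * ‖R (z k) - z k‖ := by
      refine le_trans (hRne _ _) ?_
      rw [hy]
      rw [add_sub_cancel_left, norm_smul, Real.norm_eq_abs, abs_of_pos hμ0]
    have hRmono : ‖R (z (k+1)) - z (k+1)‖ ≤ ‖R (z k) - z k‖ := by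
      calc ‖R (z (k+1)) - z (k+1)‖ ≤ μ * ‖R (z k) - z k‖ + (1-μ) * ‖R (z k) - z k‖ := by
            linarith [hstep1, hstep2]
        _ = ‖R (z k) - z k‖ := by ring
    have hn1 : ‖T (z (k+1)) - z (k+1)‖ = α * ‖R (z (k+1)) - z (k+1)‖ := by
      rw [hRsub, norm_smul, Real.norm_eq_abs, abs_of_pos hα0]
    have hn2 : ‖T (z k) - z k‖ = α * ‖R (z k) - z k‖ := by
      rw [hRsub, norm_smul, Real.norm_eq_abs, abs_of_pos hα0]
    rw [hn1, hn2]
    exact mul_le_mul_of_nonneg_left hRmono hα0.le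
  have hBsq : ∀ j k, j ≤ k → ‖T (z k) - z k‖^2 ≤ ‖T (z j) - z j‖^2 := by
    intro j k hjk
    have hmono : ∀ m n, m ≤ n → ‖T (z n) - z n‖ ≤ ‖T (z m) - z m‖ := by
      intro m n hmn
      induction n with
      | zero =>
        have hm0 : m = 0 := Nat.le_zero.mp hmn
        subst hm0
        exact le_refl _
      | succ n ih =>
        rcases Nat.lt_or_ge m (n+1) with h | h
        · exact le_trans (hB n) (ih (Nat.lt_succ_iff.mp h))
        · have : m = n + 1 := le_antisymm hmn h
          subst this; rfl
    exact pow_le_pow_left₀ (norm_nonneg _) (hmono j k hjk) 2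
  -- partial sums bound
  have hsum : ∀ n, τ * ∑ j ∈ Finset.range n, ‖T (z j) - z j‖^2
      ≤ ‖z 0 - zs‖^2 - ‖z n - zs‖^2 := by
    intro n
    induction n with
    | zero => simp
    | succ n ih =>
      rw [Finset.sum_range_succ, mul_add]
      have := hA n
      linarith
  -- rate
  have hrate : ∀ k : ℕ, ‖T (z k) - z k‖ ^ 2 ≤ ‖z 0 - zs‖ ^ 2 / (τ * (k + 1)) := by
    intro k
    have hcard : ((k:ℝ) + 1) * ‖T (z k) - z k‖^2 ≤
        ∑ j ∈ Finset.range (k+1), ‖T (z j) - z j‖^2 := by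
      calc ((k:ℝ) + 1) * ‖T (z k) - z k‖^2
          = ∑ _j ∈ Finset.range (k+1), ‖T (z k) - z k‖^2 := by
            rw [Finset.sum_const, Finset.card_range, nsmul_eq_mul]
            push_cast; ring
        _ ≤ ∑ j ∈ Finset.range (k+1), ‖T (z j) - z j‖^2 :=
            Finset.sum_le_sum fun j hj =>
              hBsq j k (Nat.lt_succ_iff.mp (Finset.mem_range.mp hj))
    have h1 : τ * (((k:ℝ) + 1) * ‖T (z k) - z k‖^2) ≤ ‖z 0 - zs‖^2 := by
      have := hsum (k+1)
      have h2 := mul_le_mul_of_nonneg_left hcard hτ.le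
      nlinarith [sq_nonneg ‖z (k+1) - zs‖]
    have hpos : 0 < τ * ((k:ℝ) + 1) := by positivity
    rw [le_div_iff₀ hpos]
    nlinarith [h1]
  refine ⟨hrate, ?_⟩
  -- summability
  have hsummable : Summable (fun k => ‖T (z k) - z k‖^2) := by
    apply summable_of_sum_range_le he_nonneg
    intro n
    have := hsum n
    have h2 : τ * ∑ j ∈ Finset.range n, ‖T (z j) - z j‖^2 ≤ ‖z 0 - zs‖^2 := by
      nlinarith [sq_nonneg ‖z n - zs‖]
    exact (le_div_iff₀' hτ).mpr h2
  set S : ℕ → ℝ := fun n => ∑ j ∈ Finset.range n, ‖T (z j) - z j‖^2 with hS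
  set L : ℝ := ∑' j, ‖T (z j) - z j‖^2 with hL
  have hStend : Tendsto S atTop (nhds L) := hsummable.hasSum.tendsto_sum_nat
  have hhalf : Tendsto (fun k : ℕ => k / 2) atTop atTop := by
    apply Filter.tendsto_atTop.mpr
    intro b
    filter_upwards [eventually_ge_atTop (2*b)] with n hn
    omega
  have hg : Tendsto (fun k : ℕ => 2 * (S (k+1) - S (k/2))) atTop (nhds 0) := by
    have h1 : Tendsto (fun k : ℕ => S (k+1)) atTop (nhds L) :=
      hStend.comp (tendsto_add_atTop_nat 1)
    have h2 : Tendsto (fun k : ℕ => S (k/2)) atTop (nhds L) :=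
      hStend.comp hhalf
    have := ((h1.sub h2).const_mul (2:ℝ))
    simpa using this
  apply squeeze_zero (fun k => by positivity) ?_ hg
  intro k
  -- (k+1) * e k ≤ 2 * (S (k+1) - S (k/2))
  have hIco : S (k+1) - S (k/2) = ∑ j ∈ Finset.Ico (k/2) (k+1), ‖T (z j) - z j‖^2 := by
    rw [hS]
    rw [Finset.sum_Ico_eq_sub _ (by omega : k/2 ≤ k+1)]
  have hcardBound : ((k:ℝ) + 1) / 2 * ‖T (z k) - z k‖^2 ≤
      ∑ j ∈ Finset.Ico (k/2) (k+1), ‖T (z j) - z j‖^2 := by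
    have hlow : ∀ j ∈ Finset.Ico (k/2) (k+1), ‖T (z k) - z k‖^2 ≤ ‖T (z j) - z j‖^2 :=
      fun j hj => hBsq j k (Nat.lt_succ_iff.mp (Finset.mem_Ico.mp hj).2)
    have hsum2 : ((k + 1 - k/2 : ℕ) : ℝ) * ‖T (z k) - z k‖^2 ≤
        ∑ j ∈ Finset.Ico (k/2) (k+1), ‖T (z j) - z j‖^2 := by
      rw [← Nat.card_Ico]
      calc ((Finset.Ico (k/2) (k+1)).card : ℝ) * ‖T (z k) - z k‖^2
          = ∑ _j ∈ Finset.Ico (k/2) (k+1), ‖T (z k) - z k‖^2 := by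
            rw [Finset.sum_const, nsmul_eq_mul]
        _ ≤ _ := Finset.sum_le_sum hlow
    refine le_trans ?_ hsum2
    apply mul_le_mul_of_nonneg_right _ (he_nonneg k)
    have hdd : ((k/2 : ℕ) : ℝ) ≤ (k:ℝ)/2 := by
      exact_mod_cast Nat.cast_div_le
    have hcast : ((k + 1 - k/2 : ℕ) : ℝ) = (k:ℝ) + 1 - ((k/2:ℕ):ℝ) := by
      have : k/2 ≤ k + 1 := by omega
      push_cast [Nat.cast_sub this]
      ring
    rw [hcast]
    linarith
  rw [hIco]
  linarith [hcardBound]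
end

section
/- Let f : H → (−∞, ∞] be proper, closed, μ-strongly convex and differentiable with (1/β)-Lipschitz gradient (μ ≥ 0, β ≥ 0 allowed to be zero with conventions). Then for all x, y ∈ dom f: ⟨∇f(x) − ∇f(y), x − y⟩ ≥ max{ μ‖x−y‖² , β‖∇f(x)−∇f(y)‖² , (μ/(μβ+1))‖x−y‖² + (β/(μβ+1))‖∇f(x)−∇f(y)‖² }. -/
open scoped InnerProductSpace

/-!
All three bounds follow from two classical facts about a convex differentiable `g` whose gradient
satisfies the one-sided bound `⟪∇g x - ∇g y, x - y⟫ ≤ L ‖x - y‖²`: the gradient is monotone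
(first-order condition), and it is `1/L`-cocoercive (Baillon–Haddad), which comes from combining the
first-order condition with the descent lemma at a gradient step. Applied to `f` with `L = 1/β`
this gives `β ‖∇f x - ∇f y‖² ≤ ⟪∇f x - ∇f y, x - y⟫`; applied to the convex function
`f - μ/2 ‖·‖²` it gives strong monotonicity and, when `μβ < 1`, cocoercivity with `L = 1/β - μ`,
which expands to the interpolation bound. When `μβ ≥ 1` the interpolation bound follows by adding
the first two, since then `μβ + 1 ≥ 2`.
-/

section InnerProduct

variable {H : Type*} [NormedAddCommGroup H] [InnerProductSpace ℝ H]

theorem norm_sub_sq_le_two_mul_sub_sub_inner {f : H → ℝ} {f' : H → H} {L : ℝ} (hL : 0 < L)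
    (hsub : ∀ x y, f x + ⟪f' x, y - x⟫_ℝ ≤ f y)
    (hdesc : ∀ x y, f y ≤ f x + ⟪f' x, y - x⟫_ℝ + L / 2 * ‖y - x‖ ^ 2) (x y : H) :
    ‖f' y - f' x‖ ^ 2 ≤ 2 * L * (f y - f x - ⟪f' x, y - x⟫_ℝ) := by
  set u := f' y - f' x
  -- compare `f` at `x` and at the gradient step `y - L⁻¹ • u` from `y`
  have hlow := hsub x (y - L⁻¹ • u)
  have hup := hdesc y (y - L⁻¹ • u)
  rw [sub_right_comm, inner_sub_right, inner_smul_right] at hlow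
  rw [sub_sub_cancel_left, inner_neg_right, inner_smul_right, norm_neg, norm_smul,
    Real.norm_of_nonneg (inv_nonneg.mpr hL.le)] at hup
  have hu : ⟪f' y, u⟫_ℝ - ⟪f' x, u⟫_ℝ = ‖u‖ ^ 2 := by
    rw [← inner_sub_left, real_inner_self_eq_norm_sq]
  have hquad : L / 2 * (L⁻¹ * ‖u‖) ^ 2 = L⁻¹ / 2 * ‖u‖ ^ 2 := by
    field_simp
  calc ‖u‖ ^ 2 = 2 * L * (L⁻¹ / 2 * ‖u‖ ^ 2) := by field_simp
    _ ≤ 2 * L * (f y - f x - ⟪f' x, y - x⟫_ℝ) := by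
      gcongr
      linear_combination hlow + hup + hquad - L⁻¹ * hu

theorem inner_sub_le_inv_mul_norm_sq {F : H → H} {β : ℝ} (hβ : 0 < β)
    (hF : ∀ x y, β * ‖F x - F y‖ ≤ ‖x - y‖) (x y : H) :
    ⟪F x - F y, x - y⟫_ℝ ≤ β⁻¹ * ‖x - y‖ ^ 2 := by
  rw [le_inv_mul_iff₀ hβ, sq]
  calc β * ⟪F x - F y, x - y⟫_ℝ ≤ β * ‖F x - F y‖ * ‖x - y‖ := by
        rw [mul_assoc]; exact mul_le_mul_of_nonneg_left (real_inner_le_norm _ _) hβ.le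
    _ ≤ ‖x - y‖ * ‖x - y‖ := mul_le_mul_of_nonneg_right (hF x y) (norm_nonneg _)

theorem inner_sub_smul_sub_sub_smul (a b x y : H) (μ : ℝ) :
    ⟪(a - μ • x) - (b - μ • y), x - y⟫_ℝ = ⟪a - b, x - y⟫_ℝ - μ * ‖x - y‖ ^ 2 := by
  rw [sub_sub_sub_comm, ← smul_sub, inner_sub_left, real_inner_smul_left,
    real_inner_self_eq_norm_sq]

theorem norm_sub_smul_sub_sub_smul_sq (a b x y : H) (μ : ℝ) :
    ‖(a - μ • x) - (b - μ • y)‖ ^ 2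
      = ‖a - b‖ ^ 2 - 2 * μ * ⟪a - b, x - y⟫_ℝ + μ ^ 2 * ‖x - y‖ ^ 2 := by
  rw [sub_sub_sub_comm, ← smul_sub, norm_sub_sq_real, real_inner_smul_right, norm_smul,
    mul_pow, Real.norm_eq_abs, sq_abs]
  ring

end InnerProduct

section Gradient

variable {H : Type*} [NormedAddCommGroup H] [InnerProductSpace ℝ H] [CompleteSpace H]
  {f : H → ℝ}

theorem HasGradientAt.hasDerivAt_comp_add_smul {f' x d : H} {t : ℝ}
    (hf : HasGradientAt f f' (x + t • d)) :
    HasDerivAt (fun s : ℝ => f (x + s • d)) ⟪f', d⟫_ℝ t := by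
  have hline : HasDerivAt (fun s : ℝ => x + s • d) d t := by
    simpa using ((hasDerivAt_id t).smul_const d).const_add x
  exact (hasGradientAt_iff_hasFDerivAt.mp hf).comp_hasDerivAt t hline

theorem HasGradientAt.sub_mul_norm_sq {f' x : H} (hf : HasGradientAt f f' x) (c : ℝ) :
    HasGradientAt (fun y => f y - c / 2 * ‖y‖ ^ 2) (f' - c • x) x := by
  rw [hasGradientAt_iff_hasFDerivAt]
  refine ((hasGradientAt_iff_hasFDerivAt.mp hf).sub
    ((hasStrictFDerivAt_norm_sq x).hasFDerivAt.const_smul (c / 2))).congr_fderiv ?_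
  ext v
  simp only [sub_apply, InnerProductSpace.toDual_apply_apply,
    smul_apply, innerSL_apply_apply, nsmul_eq_mul, Nat.cast_ofNat,
    smul_eq_mul, map_sub, map_smul, sub_right_inj]
  ring

theorem ConvexOn.add_inner_gradient_le (hf : ConvexOn ℝ Set.univ f) {f' x : H}
    (hgrad : HasGradientAt f f' x) (y : H) : f x + ⟪f', y - x⟫_ℝ ≤ f y := by
  have hline : ConvexOn ℝ Set.univ (fun t : ℝ => f (x + t • (y - x))) := by
    simpa [Function.comp_def, AffineMap.lineMap_apply, add_comm]
      using hf.comp_affineMap (AffineMap.lineMap x y)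
  have hderiv : HasDerivAt (fun t : ℝ => f (x + t • (y - x))) ⟪f', y - x⟫_ℝ 0 :=
    HasGradientAt.hasDerivAt_comp_add_smul (by simpa using hgrad)
  have hslope := hline.le_slope_of_hasDerivAt (Set.mem_univ 0) (Set.mem_univ 1) one_pos hderiv
  simp only [slope_def_field, one_smul, add_sub_cancel, zero_smul, add_zero, sub_zero,
    div_one] at hslope
  linarith

theorem ConvexOn.inner_gradient_sub_nonneg (hf : ConvexOn ℝ Set.univ f) {f' : H → H}
    (hgrad : ∀ x, HasGradientAt f (f' x) x) (x y : H) : 0 ≤ ⟪f' x - f' y, x - y⟫_ℝ := by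
  have hxy := hf.add_inner_gradient_le (hgrad x) y
  have hyx := hf.add_inner_gradient_le (hgrad y) x
  rw [← neg_sub x y, inner_neg_right] at hxy
  rw [inner_sub_left]
  linarith

theorem le_add_inner_gradient_add_mul_norm_sq {f' : H → H} {L : ℝ}
    (hgrad : ∀ x, HasGradientAt f (f' x) x)
    (hL : ∀ x y, ⟪f' x - f' y, x - y⟫_ℝ ≤ L * ‖x - y‖ ^ 2) (x y : H) :
    f y ≤ f x + ⟪f' x, y - x⟫_ℝ + L / 2 * ‖y - x‖ ^ 2 := by
  set d := y - x
  set ψ : ℝ → ℝ := fun t => f (x + t • d) - t * ⟪f' x, d⟫_ℝ - L / 2 * t ^ 2 * ‖d‖ ^ 2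
  have hψ : ∀ t, HasDerivAt ψ (⟪f' (x + t • d) - f' x, d⟫_ℝ - L * t * ‖d‖ ^ 2) t := by
    intro t
    have hline : HasDerivAt (fun s => f (x + s • d)) ⟪f' (x + t • d), d⟫_ℝ t :=
      (hgrad (x + t • d)).hasDerivAt_comp_add_smul
    have hlin := (hasDerivAt_id' t).mul_const ⟪f' x, d⟫_ℝ
    have hquad := ((hasDerivAt_pow 2 t).const_mul (L / 2)).mul_const (‖d‖ ^ 2)
    refine ((hline.sub hlin).sub hquad).congr_deriv ?_
    rw [inner_sub_left]
    ring
  have hanti : AntitoneOn ψ (Set.Ici 0) := by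
    refine antitoneOn_of_hasDerivWithinAt_nonpos (convex_Ici 0)
      (fun t _ => (hψ t).continuousAt.continuousWithinAt)
      (fun t _ => (hψ t).hasDerivWithinAt) fun t ht => ?_
    rw [interior_Ici, Set.mem_Ioi] at ht
    have h := hL (x + t • d) x
    rw [add_sub_cancel_left, inner_smul_right, norm_smul, Real.norm_of_nonneg ht.le] at h
    nlinarith
  have hψ0 : ψ 0 = f x := by simp [ψ]
  have hψ1 : ψ 1 = f y - ⟪f' x, y - x⟫_ℝ - L / 2 * ‖y - x‖ ^ 2 := by simp [ψ, d]
  linarith [hanti (Set.mem_Ici.mpr le_rfl) (Set.mem_Ici.mpr zero_le_one) zero_le_one]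

theorem ConvexOn.norm_sub_gradient_sq_le_mul_inner (hf : ConvexOn ℝ Set.univ f) {f' : H → H}
    {L : ℝ} (hL : 0 < L) (hgrad : ∀ x, HasGradientAt f (f' x) x)
    (hLip : ∀ x y, ⟪f' x - f' y, x - y⟫_ℝ ≤ L * ‖x - y‖ ^ 2) (x y : H) :
    ‖f' x - f' y‖ ^ 2 ≤ L * ⟪f' x - f' y, x - y⟫_ℝ := by
  have hbound := norm_sub_sq_le_two_mul_sub_sub_inner hL
    (fun x y => hf.add_inner_gradient_le (hgrad x) y)
    (le_add_inner_gradient_add_mul_norm_sq hgrad hLip)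
  have hxy := hbound x y
  have hyx := hbound y x
  rw [norm_sub_rev, ← neg_sub x y, inner_neg_right] at hxy
  rw [inner_sub_left]
  linarith

end Gradient

section Interpolation

variable {H : Type*} [NormedAddCommGroup H] [InnerProductSpace ℝ H] [CompleteSpace H]
  {f : H → ℝ} {f' : H → H} {μ β : ℝ}

theorem mul_norm_sq_le_inner_gradient_sub
    (hstrong : ConvexOn ℝ Set.univ (fun x => f x - μ / 2 * ‖x‖ ^ 2))
    (hgrad : ∀ x, HasGradientAt f (f' x) x) (x y : H) :
    μ * ‖x - y‖ ^ 2 ≤ ⟪f' x - f' y, x - y⟫_ℝ := by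
  have := hstrong.inner_gradient_sub_nonneg (fun x => (hgrad x).sub_mul_norm_sq μ) x y
  rw [inner_sub_smul_sub_sub_smul] at this
  linarith

theorem mul_norm_gradient_sub_sq_le_inner (hβ : 0 ≤ β) (hconv : ConvexOn ℝ Set.univ f)
    (hgrad : ∀ x, HasGradientAt f (f' x) x) (hLip : ∀ x y, β * ‖f' x - f' y‖ ≤ ‖x - y‖)
    (x y : H) : β * ‖f' x - f' y‖ ^ 2 ≤ ⟪f' x - f' y, x - y⟫_ℝ := by
  rcases hβ.eq_or_lt with rfl | hβ
  · simpa using hconv.inner_gradient_sub_nonneg hgrad x y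
  have := hconv.norm_sub_gradient_sq_le_mul_inner (inv_pos.mpr hβ) hgrad
    (inner_sub_le_inv_mul_norm_sq hβ hLip) x y
  rwa [le_inv_mul_iff₀ hβ] at this

theorem mul_norm_sq_add_mul_norm_gradient_sub_sq_le (hβ : 0 ≤ β)
    (hconv : ConvexOn ℝ Set.univ f)
    (hstrong : ConvexOn ℝ Set.univ (fun x => f x - μ / 2 * ‖x‖ ^ 2))
    (hgrad : ∀ x, HasGradientAt f (f' x) x) (hLip : ∀ x y, β * ‖f' x - f' y‖ ≤ ‖x - y‖)
    (x y : H) :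
    μ * ‖x - y‖ ^ 2 + β * ‖f' x - f' y‖ ^ 2 ≤ (μ * β + 1) * ⟪f' x - f' y, x - y⟫_ℝ := by
  have hstr := mul_norm_sq_le_inner_gradient_sub hstrong hgrad x y
  have hcoco := mul_norm_gradient_sub_sq_le_inner hβ hconv hgrad hLip x y
  have hmono := hconv.inner_gradient_sub_nonneg hgrad x y
  rcases lt_or_ge (μ * β) 1 with hsmall | hbig
  · rcases hβ.eq_or_lt with rfl | hβ
    · simpa using hstr
    -- cocoercivity of `f - μ/2 ‖·‖²`, whose gradient `f' - μ • id` has one-sided constant `β⁻¹ - μ`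
    have hL : 0 < β⁻¹ - μ := by
      rwa [sub_pos, inv_eq_one_div, lt_div_iff₀ hβ]
    have hg := hstrong.norm_sub_gradient_sq_le_mul_inner hL
      (fun x => (hgrad x).sub_mul_norm_sq μ)
      (fun x y => by
        rw [inner_sub_smul_sub_sub_smul]
        linarith [inner_sub_le_inv_mul_norm_sq hβ hLip x y]) x y
    rw [norm_sub_smul_sub_sub_smul_sq, inner_sub_smul_sub_sub_smul] at hg
    have hββ : β * β⁻¹ = 1 := mul_inv_cancel₀ hβ.ne'
    linear_combination β * hg + (⟪f' x - f' y, x - y⟫_ℝ - μ * ‖x - y‖ ^ 2) * hββ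
  · linear_combination hstr + hcoco + mul_nonneg hmono (sub_nonneg.mpr hbig)

end Interpolation

/-- Interpolation lower bound for the gradient of a μ-strongly convex function
with (1/β)-Lipschitz gradient:
`⟨∇f x - ∇f y, x - y⟩ ≥ max{μ‖x-y‖², β‖∇f x - ∇f y‖²,
(μ/(μβ+1))‖x-y‖² + (β/(μβ+1))‖∇f x - ∇f y‖²}`. -/
theorem gradient_interpolation_lower_bound
    {H : Type*} [NormedAddCommGroup H] [InnerProductSpace ℝ H] [CompleteSpace H]
    (f : H → ℝ) (f' : H → H) (μ β : ℝ) (hμ : 0 ≤ μ) (hβ : 0 ≤ β)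
    (hconv : ConvexOn ℝ Set.univ f)
    (hstrong : ConvexOn ℝ Set.univ (fun x => f x - μ / 2 * ‖x‖ ^ 2))
    (hgrad : ∀ x, HasGradientAt f (f' x) x)
    (hLip : ∀ x y, β * ‖f' x - f' y‖ ≤ ‖x - y‖) :
    ∀ x y : H,
      max (max (μ * ‖x - y‖ ^ 2) (β * ‖f' x - f' y‖ ^ 2))
          (μ / (μ * β + 1) * ‖x - y‖ ^ 2 + β / (μ * β + 1) * ‖f' x - f' y‖ ^ 2)
        ≤ ⟪f' x - f' y, x - y⟫_ℝ := by
  intro x y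
  have hinterp := mul_norm_sq_add_mul_norm_gradient_sub_sq_le hβ hconv hstrong hgrad hLip x y
  refine max_le (max_le (mul_norm_sq_le_inner_gradient_sub hstrong hgrad x y)
    (mul_norm_gradient_sub_sq_le_inner hβ hconv hgrad hLip x y)) ?_
  rw [div_mul_eq_mul_div, div_mul_eq_mul_div, ← add_div, div_le_iff₀ (by positivity)]
  linarith
end

section
/- Let A, B be maximally monotone on H and C β-cocoercive, γ ∈ (0, 2β), λ > 0. Given z ∈ H define x_B = J_{γB}(z), u_B = (1/γ)(z − x_B), x_A = J_{γA}(2x_B − z − γCx_B), u_A = (1/γ)(2x_B − z − γCx_B − x_A), and z⁺ = z + λ(x_A − x_B). Then for every x* ∈ H: 2γλ⟨x_A − x*, u_A⟩ + 2γλ⟨x_B − x*, u_B + Cx_B⟩ = ‖z − x*‖² − ‖z⁺ − x*‖² + (1 − 2/λ)‖z − z⁺‖² + 2γ⟨z − z⁺, C x_B⟩. -/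
open scoped InnerProductSpace

/-- Fundamental identity for one relaxed step of the three-operator splitting:
`2γλ⟨x_A - x*, u_A⟩ + 2γλ⟨x_B - x*, u_B + Cx_B⟩
 = ‖z - x*‖² - ‖z⁺ - x*‖² + (1 - 2/λ)‖z - z⁺‖² + 2γ⟨z - z⁺, Cx_B⟩`. -/
theorem fundamental_identity
    {H : Type*} [NormedAddCommGroup H] [InnerProductSpace ℝ H] [CompleteSpace H]
    (A B : H → Set H) (C : H → H) (β γ lam : ℝ)
    (hβ : 0 < β) (hγ : γ ∈ Set.Ioo 0 (2 * β)) (hlam : 0 < lam)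
    (hAmono : ∀ x y u v, u ∈ A x → v ∈ A y → 0 ≤ ⟪u - v, x - y⟫_ℝ)
    (hBmono : ∀ x y u v, u ∈ B x → v ∈ B y → 0 ≤ ⟪u - v, x - y⟫_ℝ)
    (hC : ∀ x y, β * ‖C x - C y‖ ^ 2 ≤ ⟪C x - C y, x - y⟫_ℝ)
    (JA JB : H → H)
    (hJA : ∀ z x, JA z = x ↔ γ⁻¹ • (z - x) ∈ A x)
    (hJB : ∀ z x, JB z = x ↔ γ⁻¹ • (z - x) ∈ B x)
    (z : H) :
    let xB := JB z
    let uB := γ⁻¹ • (z - xB)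
    let xA := JA ((2 : ℝ) • xB - z - γ • C xB)
    let uA := γ⁻¹ • ((2 : ℝ) • xB - z - γ • C xB - xA)
    let zp := z + lam • (xA - xB)
    ∀ xs : H,
      2 * γ * lam * ⟪xA - xs, uA⟫_ℝ + 2 * γ * lam * ⟪xB - xs, uB + C xB⟫_ℝ =
        ‖z - xs‖ ^ 2 - ‖zp - xs‖ ^ 2 + (1 - 2 / lam) * ‖z - zp‖ ^ 2
          + 2 * γ * ⟪z - zp, C xB⟫_ℝ := by
  intro xB uB xA uA zp xs
  have hγ0 : γ ≠ 0 := ne_of_gt hγ.1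
  have hl0 : lam ≠ 0 := ne_of_gt hlam
  simp only [uA, uB, zp]
  simp only [← real_inner_self_eq_norm_sq]
  simp only [inner_sub_left, inner_sub_right, inner_add_left, inner_add_right,
    real_inner_smul_left, real_inner_smul_right]
  rw [real_inner_comm xB xA, real_inner_comm z xA, real_inner_comm z xs,
    real_inner_comm xA xs, real_inner_comm xB xs, real_inner_comm z xB]
  field_simp
  ring
end

section
/- Let (γ_k) be defined by γ_{k+1} = γ_k/√(1 + 2γ_k(μ_B − γ_k L²/2)) with γ₀ ∈ (0, 2μ_B/L²), μ_B > 0, L ≥ 0. Then (γ_k) is positive, decreasing, γ_k → 0, and (k+1)γ_k → 1/μ_B as k → ∞; consequently γ_k = Θ(1/(k+1)). -/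
/-!
Write `q(g) = 1 + 2g(μ - gL²/2)`, so that `γ_{k+1} = γ_k / √q(γ_k)`. As long as
`0 < γ_k < 2μ/L²` we have `q(γ_k) > 1`, so the sequence stays positive and decreases; it therefore
converges, and its limit is a fixed point of `g ↦ g / √q(g)` in `[0, 2μ/L²)`, hence `0`.
For `b_k = 1/γ_k` one computes `b_{k+1} - b_k = (√q(γ_k) - 1) b_k = (2μ - γ_k L²) / (√q(γ_k) + 1)`,
which tends to `μ`; by Stolz–Cesàro `b_k / (k+1) → μ`. The two-sided bounds follow because a
positive sequence with a positive limit is bounded above and away from zero.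
-/

open Filter Topology

lemma tendsto_div_add_one_of_tendsto_sub {u : ℕ → ℝ} {l : ℝ}
    (h : Tendsto (fun n => u (n + 1) - u n) atTop (𝓝 l)) :
    Tendsto (fun n : ℕ => u n / (n + 1)) atTop (𝓝 l) := by
  have hmean : Tendsto (fun n : ℕ => (n : ℝ)⁻¹ * (u n - u 0)) atTop (𝓝 l) := by
    simpa only [Finset.sum_range_sub] using h.cesaro
  have hlim := ((tendsto_natCast_div_add_atTop (1 : ℝ)).mul hmean).add
    ((tendsto_one_div_add_atTop_nhds_zero_nat (𝕜 := ℝ)).const_mul (u 0))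
  rw [one_mul, mul_zero, add_zero] at hlim
  refine hlim.congr' ?_
  filter_upwards [eventually_ne_atTop 0] with n hn
  have hn' : (n : ℝ) ≠ 0 := Nat.cast_ne_zero.2 hn
  field_simp
  ring

lemma exists_pos_le_of_tendsto_pos {u : ℕ → ℝ} {l : ℝ} (hu : ∀ n, 0 < u n) (hl : 0 < l)
    (h : Tendsto u atTop (𝓝 l)) : ∃ c, 0 < c ∧ ∀ n, c ≤ u n := by
  obtain ⟨C, hC⟩ := (h.inv₀ hl.ne').bddAbove_range
  have hCpos : 0 < C := (inv_pos.2 (hu 0)).trans_le (hC ⟨0, rfl⟩)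
  exact ⟨C⁻¹, inv_pos.2 hCpos, fun n => (inv_le_comm₀ hCpos (hu n)).2 (hC ⟨n, rfl⟩)⟩

lemma exists_bounds_of_tendsto_add_one_mul {γ : ℕ → ℝ} {l : ℝ} (hγ : ∀ n, 0 < γ n) (hl : 0 < l)
    (h : Tendsto (fun n : ℕ => ((n : ℝ) + 1) * γ n) atTop (𝓝 l)) :
    ∃ c₁ c₂ : ℝ, 0 < c₁ ∧ ∀ n : ℕ, c₁ / ((n : ℝ) + 1) ≤ γ n ∧ γ n ≤ c₂ / ((n : ℝ) + 1) := by
  obtain ⟨c₁, hc₁, hlow⟩ := exists_pos_le_of_tendsto_pos (fun n => by have := hγ n; positivity) hl h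
  obtain ⟨c₂, hup⟩ := h.bddAbove_range
  refine ⟨c₁, c₂, hc₁, fun n => ⟨?_, ?_⟩⟩
  · rw [div_le_iff₀ (by positivity), mul_comm]
    exact hlow n
  · rw [le_div_iff₀ (by positivity), mul_comm]
    exact hup ⟨n, rfl⟩

namespace AcceleratedStepsize

noncomputable def stepFactor (μ L g : ℝ) : ℝ := 1 + 2 * g * (μ - g * L ^ 2 / 2)

variable {μ L g : ℝ}

lemma one_lt_stepFactor (hg : 0 < g) (hgL : g * L ^ 2 < 2 * μ) : 1 < stepFactor μ L g := by
  have := mul_pos hg (sub_pos.2 hgL)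
  unfold stepFactor
  linarith

lemma continuous_stepFactor : Continuous (stepFactor μ L) := by
  unfold stepFactor
  fun_prop

lemma div_sqrt_stepFactor_mem_Ioo (hg : 0 < g) (hgL : g * L ^ 2 < 2 * μ) :
    g / √(stepFactor μ L g) ∈ Set.Ioo 0 g := by
  have hq := one_lt_stepFactor hg hgL
  exact ⟨div_pos hg (Real.sqrt_pos.2 (by linarith)),
    div_lt_self hg (Real.lt_sqrt_of_sq_lt (by simpa using hq))⟩

lemma inv_div_sqrt_stepFactor_sub_inv (hg : g ≠ 0) (hq : 0 ≤ stepFactor μ L g) :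
    (g / √(stepFactor μ L g))⁻¹ - g⁻¹ = (2 * μ - g * L ^ 2) / (√(stepFactor μ L g) + 1) := by
  have hsq := Real.sq_sqrt hq
  rw [inv_div, eq_div_iff (by positivity)]
  field_simp
  unfold stepFactor at hsq ⊢
  linear_combination hsq

variable {γ : ℕ → ℝ} (hrec : ∀ k, γ (k + 1) = γ k / √(stepFactor μ L (γ k)))
  (h0 : 0 < γ 0) (h0' : γ 0 * L ^ 2 < 2 * μ)
include hrec h0 h0'

lemma pos_and_mul_sq_lt (k : ℕ) : 0 < γ k ∧ γ k * L ^ 2 < 2 * μ := by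
  induction k with
  | zero => exact ⟨h0, h0'⟩
  | succ k ih =>
    have hstep := hrec k ▸ div_sqrt_stepFactor_mem_Ioo ih.1 ih.2
    exact ⟨hstep.1, by nlinarith [hstep.2, sq_nonneg L]⟩

lemma strictAnti : StrictAnti γ := by
  refine strictAnti_nat_of_succ_lt fun k => ?_
  have hk := pos_and_mul_sq_lt hrec h0 h0' k
  exact (hrec k ▸ div_sqrt_stepFactor_mem_Ioo hk.1 hk.2).2

lemma tendsto_zero : Tendsto γ atTop (𝓝 0) := by
  have hpos k := (pos_and_mul_sq_lt hrec h0 h0' k).1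
  have hbdd : BddBelow (Set.range γ) := ⟨0, by rintro _ ⟨k, rfl⟩; exact (hpos k).le⟩
  set g := ⨅ k, γ k
  have hlim : Tendsto γ atTop (𝓝 g) := tendsto_atTop_ciInf (strictAnti hrec h0 h0').antitone hbdd
  have hg : 0 ≤ g := le_ciInf fun k => (hpos k).le
  have hgL : g * L ^ 2 < 2 * μ := by nlinarith [ciInf_le hbdd 0, sq_nonneg L]
  rcases hg.eq_or_lt with hg0 | hg0
  · rwa [← hg0] at hlim
  have hq := zero_lt_one.trans (one_lt_stepFactor hg0 hgL)
  have hfix : g = g / √(stepFactor μ L g) := by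
    refine tendsto_nhds_unique ((tendsto_add_atTop_iff_nat 1).2 hlim) ?_
    simp only [hrec]
    exact hlim.div ((continuous_stepFactor.tendsto g).comp hlim).sqrt (Real.sqrt_pos.2 hq).ne'
  exact absurd hfix (div_sqrt_stepFactor_mem_Ioo hg0 hgL).2.ne'

lemma inv_succ_sub_inv (k : ℕ) :
    (γ (k + 1))⁻¹ - (γ k)⁻¹ = (2 * μ - γ k * L ^ 2) / (√(stepFactor μ L (γ k)) + 1) := by
  obtain ⟨hk, hkL⟩ := pos_and_mul_sq_lt hrec h0 h0' k
  rw [hrec k]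
  exact inv_div_sqrt_stepFactor_sub_inv hk.ne' (zero_le_one.trans (one_lt_stepFactor hk hkL).le)

lemma tendsto_inv_succ_sub_inv : Tendsto (fun k => (γ (k + 1))⁻¹ - (γ k)⁻¹) atTop (𝓝 μ) := by
  have hγ := tendsto_zero hrec h0 h0'
  have hnum : Tendsto (fun k => 2 * μ - γ k * L ^ 2) atTop (𝓝 (2 * μ)) := by
    simpa using tendsto_const_nhds.sub (hγ.mul_const (L ^ 2))
  have hq : Tendsto (fun k => stepFactor μ L (γ k)) atTop (𝓝 1) := by
    have h1 : stepFactor μ L 0 = 1 := by simp [stepFactor]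
    exact h1 ▸ (continuous_stepFactor.tendsto 0).comp hγ
  have hden : Tendsto (fun k => √(stepFactor μ L (γ k)) + 1) atTop (𝓝 2) := by
    simpa [one_add_one_eq_two] using hq.sqrt.add_const 1
  have hlim := hnum.div hden two_ne_zero
  rw [mul_div_cancel_left₀ μ two_ne_zero] at hlim
  exact hlim.congr fun k => (inv_succ_sub_inv hrec h0 h0' k).symm

end AcceleratedStepsize

open AcceleratedStepsize in
theorem accelerated_stepsize_asymptotics_general
    (γ : ℕ → ℝ) (μB L : ℝ) (hμB : 0 < μB)
    (h0 : 0 < γ 0) (h0' : γ 0 * L ^ 2 < 2 * μB)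
    (hrec : ∀ k, γ (k + 1) = γ k / Real.sqrt (1 + 2 * γ k * (μB - γ k * L ^ 2 / 2))) :
    (∀ k, 0 < γ k) ∧ StrictAnti γ ∧
    Tendsto γ atTop (nhds 0) ∧
    Tendsto (fun k : ℕ => ((k : ℝ) + 1) * γ k) atTop (nhds (1 / μB)) ∧
    ∃ c₁ c₂ : ℝ, 0 < c₁ ∧ ∀ k : ℕ, c₁ / ((k : ℝ) + 1) ≤ γ k ∧ γ k ≤ c₂ / ((k : ℝ) + 1) := by
  have hpos k := (pos_and_mul_sq_lt hrec h0 h0' k).1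
  have hlim : Tendsto (fun k : ℕ => ((k : ℝ) + 1) * γ k) atTop (𝓝 (1 / μB)) := by
    have := (tendsto_div_add_one_of_tendsto_sub (u := fun k => (γ k)⁻¹)
      (tendsto_inv_succ_sub_inv hrec h0 h0')).inv₀ hμB.ne'
    simpa [inv_div, div_eq_mul_inv] using this
  exact ⟨hpos, strictAnti hrec h0 h0', tendsto_zero hrec h0 h0', hlim,
    exists_bounds_of_tendsto_add_one_mul hpos (one_div_pos.2 hμB) hlim⟩

/-- Behavior of the accelerated stepsize sequence
`γ_{k+1} = γ_k / √(1 + 2γ_k(μ_B - γ_k L²/2))` with `γ₀ ∈ (0, 2μ_B/L²)`: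
positivity, strict decrease, `γ_k → 0`, `(k+1)γ_k → 1/μ_B`, and `γ_k = Θ(1/(k+1))`. -/
theorem accelerated_stepsize_asymptotics
    (γ : ℕ → ℝ) (μB L : ℝ) (hμB : 0 < μB) (hL : 0 ≤ L)
    (h0 : 0 < γ 0) (h0' : γ 0 * L ^ 2 < 2 * μB)
    (hrec : ∀ k, γ (k + 1) = γ k / Real.sqrt (1 + 2 * γ k * (μB - γ k * L ^ 2 / 2))) :
    (∀ k, 0 < γ k) ∧ StrictAnti γ ∧
    Tendsto γ atTop (nhds 0) ∧
    Tendsto (fun k : ℕ => ((k : ℝ) + 1) * γ k) atTop (nhds (1 / μB)) ∧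
    ∃ c₁ c₂ : ℝ, 0 < c₁ ∧ ∀ k : ℕ, c₁ / ((k : ℝ) + 1) ≤ γ k ∧ γ k ≤ c₂ / ((k : ℝ) + 1) :=
  accelerated_stepsize_asymptotics_general γ μB L hμB h0 h0' hrec
end

section
/- Let T : H → H be α-averaged with Fix T ≠ ∅ and let C be β-cocoercive with the one-step inequality ‖z^{k+1} − z*‖² + τ_k‖Tz^k − z^k‖² + γλ_k(2β − γ/ε)‖Cx_B^k − Cx*‖² ≤ ‖z^k − z*‖² holding along the iteration z^{k+1} = (1−λ_k)z^k + λ_kTz^k. Suppose additionally that B is uniformly monotone on every bounded subset of its domain. Then x_B^k := J_{γB}(z^k) converges strongly to x* := J_{γB}(z*) ∈ zer(A+B+C), where z* is the weak limit of (z^k). -/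
open Filter Bornology
open scoped InnerProductSpace

private lemma dys_nonneg_cancel {c t : ℝ} (hc : 0 < c) (h : 0 ≤ c * t) : 0 ≤ t :=
  le_of_mul_le_mul_left (by simpa using h) hc

private theorem dys_core {H : Type*} [NormedAddCommGroup H] [InnerProductSpace ℝ H]
    (d p q G : H) (γ β ε lam : ℝ)
    (hγ : 0 < γ) (hε : 0 < ε) (hlam : 0 < lam) (hlam2 : lam ≤ 2)
    (h1 : 0 ≤ ⟪d - p, p⟫_ℝ)
    (h2 : 0 ≤ ⟪(2:ℝ)•p - d - γ•G - q, q⟫_ℝ)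
    (h3 : β * ‖G‖^2 ≤ ⟪G, p⟫_ℝ) :
    (‖d - lam•(p - q)‖^2 + lam*(2 - lam - ε)*‖p - q‖^2
      + lam*γ*(2*β - γ/ε)*‖G‖^2 ≤ ‖d‖^2)
    ∧ (2*lam*⟪d - p, p⟫_ℝ ≤ ‖d‖^2 - ‖d - lam•(p - q)‖^2 + 2*lam*γ*(‖G‖*‖q‖)) := by
  have hde : ⟪d, p - q⟫_ℝ = ⟪d, p⟫_ℝ - ⟪d, q⟫_ℝ := by
    simp [inner_sub_right]
  have h1e : ⟪d - p, p⟫_ℝ = ⟪d, p⟫_ℝ - ‖p‖^2 := by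
    simp [inner_sub_left, real_inner_self_eq_norm_sq]
  have h1' : 0 ≤ ⟪d, p⟫_ℝ - ‖p‖^2 := h1e ▸ h1
  have h2e : ⟪(2:ℝ)•p - d - γ•G - q, q⟫_ℝ
      = 2*⟪p, q⟫_ℝ - ⟪d, q⟫_ℝ - γ*⟪G, q⟫_ℝ - ‖q‖^2 := by
    simp only [inner_sub_left, real_inner_smul_left, real_inner_self_eq_norm_sq]
    try ring
  have h2' : 0 ≤ 2*⟪p, q⟫_ℝ - ⟪d, q⟫_ℝ - γ*⟪G, q⟫_ℝ - ‖q‖^2 := h2e ▸ h2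
  have hGq : γ*⟪G, q⟫_ℝ = γ*⟪G, p⟫_ℝ - γ*⟪G, p - q⟫_ℝ := by
    rw [inner_sub_right]; ring
  have hen : ‖p - q‖^2 = ‖p‖^2 - 2*⟪p,q⟫_ℝ + ‖q‖^2 := by
    rw [@norm_sub_sq_real]; try ring
  have hdn : ‖d - lam•(p-q)‖^2 = ‖d‖^2 - 2*lam*⟪d, p-q⟫_ℝ + lam^2*‖p-q‖^2 := by
    rw [@norm_sub_sq_real, real_inner_smul_right, norm_smul]
    simp only [mul_pow, sq_abs, Real.norm_eq_abs]; ring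
  have hyoung : 2*γ*⟪G, p-q⟫_ℝ ≤ ε*‖p-q‖^2 + γ^2/ε*‖G‖^2 := by
    have h0 : (0:ℝ) ≤ ‖ε•(p-q) - γ•G‖^2 := sq_nonneg _
    rw [@norm_sub_sq_real, real_inner_smul_left, real_inner_smul_right,
      norm_smul, norm_smul] at h0
    simp only [mul_pow, sq_abs, Real.norm_eq_abs] at h0
    rw [real_inner_comm G (p-q)] at h0
    have h4 : 2*γ*⟪G,p-q⟫_ℝ - ε*‖p-q‖^2 ≤ γ^2*‖G‖^2/ε := by
      rw [le_div_iff₀ hε]; nlinarith [h0]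
    have he5 : γ^2/ε*‖G‖^2 = γ^2*‖G‖^2/ε := by ring
    linarith
  have hA : ‖p-q‖^2 + γ*⟪G,p⟫_ℝ - γ*⟪G,p-q⟫_ℝ ≤ ⟪d, p-q⟫_ℝ := by
    linarith
  have hCS : -(‖G‖*‖q‖) ≤ ⟪G, q⟫_ℝ := by
    have := abs_real_inner_le_norm G q
    cases' abs_le.mp this with h _; linarith
  constructor
  · have h3' := mul_le_mul_of_nonneg_left h3 hγ.le
    have hB : (2-ε)*‖p-q‖^2 + γ*(2*β-γ/ε)*‖G‖^2 ≤ 2*⟪d,p-q⟫_ℝ := by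
      have he : γ*(2*β-γ/ε)*‖G‖^2 = 2*(γ*(β*‖G‖^2)) - γ^2/ε*‖G‖^2 := by ring
      linarith
    rw [hdn]
    nlinarith [mul_le_mul_of_nonneg_left hB hlam.le]
  · have hstep : ⟪d - p, p⟫_ℝ ≤ ⟪d, p-q⟫_ℝ - ‖p-q‖^2 + γ*(‖G‖*‖q‖) := by
      have hg := mul_le_mul_of_nonneg_left hCS hγ.le
      rw [h1e]; linarith
    rw [hdn]
    nlinarith [mul_le_mul_of_nonneg_left hstep (by positivity : (0:ℝ) ≤ 2*lam),
      mul_nonneg (mul_nonneg hlam.le (by linarith : (0:ℝ) ≤ 2 - lam)) (sq_nonneg ‖p-q‖)]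

private lemma dys_res_nonexp {H : Type*} [NormedAddCommGroup H] [InnerProductSpace ℝ H]
    (S : H → Set H) (γ : ℝ) (hγ : 0 < γ) (J : H → H)
    (hJ : ∀ z x, J z = x ↔ γ⁻¹ • (z - x) ∈ S x)
    (hmono : ∀ x y u v, u ∈ S x → v ∈ S y → 0 ≤ ⟪u - v, x - y⟫_ℝ)
    (y y' : H) : ‖J y - J y'‖ ≤ ‖y - y'‖ := by
  have hm := hmono (J y) (J y') _ _ ((hJ y (J y)).1 rfl) ((hJ y' (J y')).1 rfl)
  rw [← smul_sub, real_inner_smul_left] at hm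
  have h0 : 0 ≤ ⟪(y - J y) - (y' - J y'), J y - J y'⟫_ℝ :=
    dys_nonneg_cancel (inv_pos.2 hγ) hm
  have h1 : ⟪(y - J y) - (y' - J y'), J y - J y'⟫_ℝ
      = ⟪y - y', J y - J y'⟫_ℝ - ‖J y - J y'‖^2 := by
    have hv : (y - J y) - (y' - J y') = (y - y') - (J y - J y') := by abel
    rw [hv, inner_sub_left, real_inner_self_eq_norm_sq]
  have h2 : ‖J y - J y'‖^2 ≤ ‖y - y'‖ * ‖J y - J y'‖ :=
    le_trans (by linarith) (real_inner_le_norm _ _)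
  rcases eq_or_lt_of_le (norm_nonneg (J y - J y')) with h|h
  · rw [← h]; exact norm_nonneg _
  · nlinarith [h2, h]

private lemma dys_beta_norm_le {H : Type*} [NormedAddCommGroup H] [InnerProductSpace ℝ H]
    {g p : H} {β : ℝ} (hβ : 0 < β) (h : β * ‖g‖^2 ≤ ⟪g, p⟫_ℝ) : β * ‖g‖ ≤ ‖p‖ := by
  have h2 : β * ‖g‖^2 ≤ ‖g‖ * ‖p‖ := le_trans h (real_inner_le_norm _ _)
  rcases eq_or_lt_of_le (norm_nonneg g) with hg|hg
  · rw [← hg]; simpa using norm_nonneg p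
  · nlinarith [h2, hg]

private theorem dys_onestep {H : Type*} [NormedAddCommGroup H] [InnerProductSpace ℝ H]
    (A B : H → Set H) (C : H → H) (β ε γ : ℝ)
    (hγ : 0 < γ) (hε : 0 < ε)
    (hAmono : ∀ x y u v, u ∈ A x → v ∈ A y → 0 ≤ ⟪u - v, x - y⟫_ℝ)
    (hBmono : ∀ x y u v, u ∈ B x → v ∈ B y → 0 ≤ ⟪u - v, x - y⟫_ℝ)
    (hC : ∀ x y, β * ‖C x - C y‖ ^ 2 ≤ ⟪C x - C y, x - y⟫_ℝ)
    (JA JB : H → H)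
    (hJA : ∀ z x, JA z = x ↔ γ⁻¹ • (z - x) ∈ A x)
    (hJB : ∀ z x, JB z = x ↔ γ⁻¹ • (z - x) ∈ B x)
    (zs : H) (hXs : JA ((2:ℝ) • JB zs - zs - γ • C (JB zs)) = JB zs)
    (lam : ℝ) (hlam : 0 < lam) (hlam2 : lam ≤ 2)
    (zk zk1 : H)
    (hz1 : zk1 = (1 - lam) • zk
      + lam • (zk - JB zk + JA ((2:ℝ) • JB zk - zk - γ • C (JB zk)))) :
    (‖zk1 - zs‖^2
      + lam*(2 - lam - ε)*‖JB zk - JA ((2:ℝ) • JB zk - zk - γ • C (JB zk))‖^2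
      + lam*γ*(2*β - γ/ε)*‖C (JB zk) - C (JB zs)‖^2 ≤ ‖zk - zs‖^2)
    ∧ (2*lam*⟪(zk - zs) - (JB zk - JB zs), JB zk - JB zs⟫_ℝ
        ≤ ‖zk - zs‖^2 - ‖zk1 - zs‖^2
          + 2*lam*γ*(‖C (JB zk) - C (JB zs)‖
              * ‖JA ((2:ℝ) • JB zk - zk - γ • C (JB zk)) - JB zs‖)) := by
  have h1 : 0 ≤ ⟪(zk - zs) - (JB zk - JB zs), JB zk - JB zs⟫_ℝ := by
    have hm := hBmono (JB zk) (JB zs) _ _ ((hJB zk (JB zk)).1 rfl)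
      ((hJB zs (JB zs)).1 rfl)
    rw [← smul_sub, real_inner_smul_left] at hm
    have hv : (zk - JB zk) - (zs - JB zs) = (zk - zs) - (JB zk - JB zs) := by abel
    rw [hv] at hm
    exact dys_nonneg_cancel (inv_pos.2 hγ) hm
  have h2 : 0 ≤ ⟪(2:ℝ)•(JB zk - JB zs) - (zk - zs)
      - γ•(C (JB zk) - C (JB zs))
      - (JA ((2:ℝ) • JB zk - zk - γ • C (JB zk)) - JB zs),
      JA ((2:ℝ) • JB zk - zk - γ • C (JB zk)) - JB zs⟫_ℝ := by
    have hm := hAmono (JA ((2:ℝ) • JB zk - zk - γ • C (JB zk))) (JB zs) _ _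
      ((hJA ((2:ℝ) • JB zk - zk - γ • C (JB zk))
        (JA ((2:ℝ) • JB zk - zk - γ • C (JB zk)))).1 rfl)
      ((hJA ((2:ℝ) • JB zs - zs - γ • C (JB zs)) (JB zs)).1 hXs)
    rw [← smul_sub, real_inner_smul_left] at hm
    have hv : ((2:ℝ) • JB zk - zk - γ • C (JB zk)
          - JA ((2:ℝ) • JB zk - zk - γ • C (JB zk)))
        - ((2:ℝ) • JB zs - zs - γ • C (JB zs) - JB zs)
        = (2:ℝ)•(JB zk - JB zs) - (zk - zs) - γ•(C (JB zk) - C (JB zs))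
          - (JA ((2:ℝ) • JB zk - zk - γ • C (JB zk)) - JB zs) := by
      module
    rw [hv] at hm
    exact dys_nonneg_cancel (inv_pos.2 hγ) hm
  have h3 : β * ‖C (JB zk) - C (JB zs)‖^2
      ≤ ⟪C (JB zk) - C (JB zs), JB zk - JB zs⟫_ℝ := hC (JB zk) (JB zs)
  have hcore := dys_core (zk - zs) (JB zk - JB zs)
    (JA ((2:ℝ) • JB zk - zk - γ • C (JB zk)) - JB zs)
    (C (JB zk) - C (JB zs)) γ β ε lam hγ hε hlam hlam2 h1 h2 h3
  have hpq : JB zk - JB zs - (JA ((2:ℝ) • JB zk - zk - γ • C (JB zk)) - JB zs)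
      = JB zk - JA ((2:ℝ) • JB zk - zk - γ • C (JB zk)) := by abel
  have hzz : zk - zs - lam • (JB zk - JA ((2:ℝ) • JB zk - zk - γ • C (JB zk)))
      = zk1 - zs := by rw [hz1]; module
  rw [hpq, hzz] at hcore
  exact hcore

/-- Strong convergence of `x_B^k = J_{γB}(z^k)` when `B` is uniformly monotone on
every bounded subset of its domain, under the setting of the main convergence
theorem (including the one-step inequality). -/
theorem strong_convergence_uniformly_monotone_B
    {H : Type*} [NormedAddCommGroup H] [InnerProductSpace ℝ H] [CompleteSpace H]
    (A B : H → Set H) (C : H → H) (β ε γ α : ℝ)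
    (hβ : 0 < β) (hε : ε ∈ Set.Ioo (0 : ℝ) 1) (hγ : γ ∈ Set.Ioo 0 (2 * β * ε))
    (hα : α = 1 / (2 - ε))
    (hAmono : ∀ x y u v, u ∈ A x → v ∈ A y → 0 ≤ ⟪u - v, x - y⟫_ℝ)
    (hBmono : ∀ x y u v, u ∈ B x → v ∈ B y → 0 ≤ ⟪u - v, x - y⟫_ℝ)
    (hC : ∀ x y, β * ‖C x - C y‖ ^ 2 ≤ ⟪C x - C y, x - y⟫_ℝ)
    (JA JB : H → H)
    (hJA : ∀ z x, JA z = x ↔ γ⁻¹ • (z - x) ∈ A x)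
    (hJB : ∀ z x, JB z = x ↔ γ⁻¹ • (z - x) ∈ B x)
    (T : H → H)
    (hT : ∀ z, T z = z - JB z + JA ((2 : ℝ) • JB z - z - γ • C (JB z)))
    (hfixne : ∃ w, T w = w)
    (lam : ℕ → ℝ) (hlam : ∀ k, lam k ∈ Set.Ioo 0 (1 / α))
    (hinf : ∃ δ > (0 : ℝ), ∀ k, δ ≤ lam k)
    (z : ℕ → H)
    (hrec : ∀ k, z (k + 1) = (1 - lam k) • z k + lam k • T (z k))
    -- the one-step inequality along the iteration
    (honestep : ∀ (zs : H), T zs = zs → ∀ k,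
      ‖z (k + 1) - zs‖ ^ 2 + ((1 - lam k / α) * (lam k / α)) * ‖T (z k) - z k‖ ^ 2
        + γ * lam k * (2 * β - γ / ε) * ‖C (JB (z k)) - C (JB zs)‖ ^ 2
      ≤ ‖z k - zs‖ ^ 2)
    -- `B` is uniformly monotone on every bounded subset of its domain
    (hBunif : ∀ s : Set H, IsBounded s → ∃ φ : ℝ → ENNReal,
      φ 0 = 0 ∧ (∀ t : ℝ, 0 < t → 0 < φ t) ∧ MonotoneOn φ (Set.Ici 0) ∧
      ∀ x ∈ s, ∀ y ∈ s, ∀ u ∈ B x, ∀ v ∈ B y,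
        φ ‖x - y‖ ≤ ENNReal.ofReal ⟪u - v, x - y⟫_ℝ)
    (zs : H) (hfix : T zs = zs)
    -- `z*` is the weak limit of `(z^k)`
    (hweak : ∀ f : H →L[ℝ] ℝ, Tendsto (fun k => f (z k)) atTop (nhds (f zs))) :
    Tendsto (fun k => JB (z k)) atTop (nhds (JB zs)) ∧
    (∃ a ∈ A (JB zs), ∃ b ∈ B (JB zs), a + b + C (JB zs) = 0) := by
  obtain ⟨hγ0, hγ2⟩ := hγ
  obtain ⟨hε0, hε1⟩ := hε
  obtain ⟨lb, hlb0, hlble⟩ := hinf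
  have hβγ : 0 < 2*β - γ/ε := by
    have : γ/ε < 2*β := (div_lt_iff₀ hε0).2 (by linarith)
    linarith
  have hainv : 1/α = 2 - ε := by rw [hα, one_div_one_div]
  have hlamlt : ∀ k, lam k < 2 - ε := fun k => hainv ▸ (hlam k).2
  have hlam0 : ∀ k, 0 < lam k := fun k => (hlam k).1
  have hlam2 : ∀ k, lam k ≤ 2 := fun k => by have := hlamlt k; linarith
  -- fixed point structure
  have hfp : zs - JB zs + JA ((2 : ℝ) • JB zs - zs - γ • C (JB zs)) = zs :=
    (hT zs).symm.trans hfix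
  have hXs : JA ((2 : ℝ) • JB zs - zs - γ • C (JB zs)) = JB zs := by
    calc JA ((2 : ℝ) • JB zs - zs - γ • C (JB zs))
        = (zs - JB zs + JA ((2 : ℝ) • JB zs - zs - γ • C (JB zs))) - zs + JB zs := by
          abel
      _ = zs - zs + JB zs := by rw [hfp]
      _ = JB zs := by abel
  -- the inclusion 0 ∈ (A+B+C)(JB zs)
  have hzer : ∃ a ∈ A (JB zs), ∃ b ∈ B (JB zs), a + b + C (JB zs) = 0 := by
    refine ⟨γ⁻¹ • (((2 : ℝ) • JB zs - zs - γ • C (JB zs)) - JB zs),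
      (hJA _ (JB zs)).1 hXs,
      γ⁻¹ • (zs - JB zs), (hJB zs (JB zs)).1 rfl, ?_⟩
    rw [← smul_add]
    have hv : (((2 : ℝ) • JB zs - zs - γ • C (JB zs)) - JB zs) + (zs - JB zs)
        = (-γ) • C (JB zs) := by module
    rw [hv, smul_smul]
    have hγγ : γ⁻¹ * (-γ) = -1 := by field_simp
    rw [hγγ, neg_one_smul]
    abel
  refine ⟨?_, hzer⟩
  -- step inequalities
  have hstep := fun k => dys_onestep A B C β ε γ hγ0 hε0 hAmono hBmono hC JA JB hJA hJB
    zs hXs (lam k) (hlam0 k) (hlam2 k) (z k) (z (k+1)) (by rw [hrec k, hT (z k)])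
  have key1 := fun k => (hstep k).1
  have key2 := fun k => (hstep k).2
  -- monotone decrease of D k = ‖z k - zs‖²
  have hmono1 : ∀ k, ‖z (k+1) - zs‖^2 ≤ ‖z k - zs‖^2 := by
    intro k
    have t1 : 0 ≤ lam k*(2 - lam k - ε)
        *‖JB (z k) - JA ((2:ℝ) • JB (z k) - z k - γ • C (JB (z k)))‖^2 :=
      mul_nonneg (mul_nonneg (hlam0 k).le (by linarith [hlamlt k])) (sq_nonneg _)
    have t2 : 0 ≤ lam k*γ*(2*β - γ/ε)*‖C (JB (z k)) - C (JB zs)‖^2 :=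
      mul_nonneg (mul_nonneg (mul_nonneg (hlam0 k).le hγ0.le) hβγ.le) (sq_nonneg _)
    linarith [key1 k]
  have hanti : Antitone (fun k => ‖z k - zs‖^2) := antitone_nat_of_succ_le hmono1
  have hbdd : BddBelow (Set.range (fun k => ‖z k - zs‖^2)) :=
    ⟨0, by rintro x ⟨k, rfl⟩; positivity⟩
  have hDlim : Tendsto (fun k => ‖z k - zs‖^2) atTop (nhds (⨅ k, ‖z k - zs‖^2)) :=
    tendsto_atTop_ciInf hanti hbdd
  have hdiff : Tendsto (fun k => ‖z k - zs‖^2 - ‖z (k+1) - zs‖^2) atTop (nhds 0) := by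
    have h2 := hDlim.comp (tendsto_add_atTop_nat 1)
    simpa [Function.comp] using hDlim.sub h2
  -- boundedness
  have hRk : ∀ k, ‖z k - zs‖ ≤ ‖z 0 - zs‖ := by
    intro k
    have h := hanti (Nat.zero_le k)
    simp only at h
    nlinarith [norm_nonneg (z k - zs), norm_nonneg (z 0 - zs)]
  have hPnon : ∀ k, ‖JB (z k) - JB zs‖ ≤ ‖z k - zs‖ :=
    fun k => dys_res_nonexp B γ hγ0 JB hJB hBmono (z k) zs
  have hPR : ∀ k, ‖JB (z k) - JB zs‖ ≤ ‖z 0 - zs‖ :=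
    fun k => le_trans (hPnon k) (hRk k)
  have hGR : ∀ k, ‖C (JB (z k)) - C (JB zs)‖ ≤ ‖z 0 - zs‖/β := by
    intro k
    rw [le_div_iff₀ hβ]
    have h1 := dys_beta_norm_le hβ (hC (JB (z k)) (JB zs))
    have := hPR k
    linarith [mul_comm ‖C (JB (z k)) - C (JB zs)‖ β]
  have hQR : ∀ k, ‖JA ((2:ℝ) • JB (z k) - z k - γ • C (JB (z k))) - JB zs‖
      ≤ 3*‖z 0 - zs‖ + γ*(‖z 0 - zs‖/β) := by
    intro k
    have hne := dys_res_nonexp A γ hγ0 JA hJA hAmono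
      ((2:ℝ) • JB (z k) - z k - γ • C (JB (z k)))
      ((2:ℝ) • JB zs - zs - γ • C (JB zs))
    rw [hXs] at hne
    have hv : ((2:ℝ) • JB (z k) - z k - γ • C (JB (z k)))
        - ((2:ℝ) • JB zs - zs - γ • C (JB zs))
        = ((2:ℝ)•(JB (z k) - JB zs) - (z k - zs)) - γ•(C (JB (z k)) - C (JB zs)) := by
      module
    rw [hv] at hne
    have t1 : ‖((2:ℝ)•(JB (z k) - JB zs) - (z k - zs)) - γ•(C (JB (z k)) - C (JB zs))‖
        ≤ ‖(2:ℝ)•(JB (z k) - JB zs)‖ + ‖z k - zs‖ + ‖γ•(C (JB (z k)) - C (JB zs))‖ :=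
      le_trans (norm_sub_le _ _) (by linarith [norm_sub_le ((2:ℝ)•(JB (z k) - JB zs)) (z k - zs)])
    rw [norm_smul, norm_smul] at t1
    simp only [Real.norm_eq_abs] at t1
    rw [abs_of_pos (by norm_num : (0:ℝ) < 2), abs_of_pos hγ0] at t1
    have t2 : γ*‖C (JB (z k)) - C (JB zs)‖ ≤ γ*(‖z 0 - zs‖/β) :=
      mul_le_mul_of_nonneg_left (hGR k) hγ0.le
    have := hPR k
    have := hRk k
    linarith [hne]
  -- C (JB (z k)) → C (JB zs)
  have hGsq : ∀ k, ‖C (JB (z k)) - C (JB zs)‖^2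
      ≤ (‖z k - zs‖^2 - ‖z (k+1) - zs‖^2)/(lb*γ*(2*β - γ/ε)) := by
    intro k
    rw [le_div_iff₀ (mul_pos (mul_pos hlb0 hγ0) hβγ)]
    have t1 : 0 ≤ lam k*(2 - lam k - ε)
        *‖JB (z k) - JA ((2:ℝ) • JB (z k) - z k - γ • C (JB (z k)))‖^2 :=
      mul_nonneg (mul_nonneg (hlam0 k).le (by linarith [hlamlt k])) (sq_nonneg _)
    have t2 : lb*γ*(2*β - γ/ε)*‖C (JB (z k)) - C (JB zs)‖^2
        ≤ lam k*γ*(2*β - γ/ε)*‖C (JB (z k)) - C (JB zs)‖^2 :=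
      mul_le_mul_of_nonneg_right (mul_le_mul_of_nonneg_right
        (mul_le_mul_of_nonneg_right (hlble k) hγ0.le) hβγ.le) (sq_nonneg _)
    linarith [key1 k]
  have hGsqlim : Tendsto (fun k => ‖C (JB (z k)) - C (JB zs)‖^2) atTop (nhds 0) :=
    squeeze_zero (fun k => sq_nonneg _) hGsq
      (by simpa using hdiff.div_const (lb*γ*(2*β - γ/ε)))
  have hGlim : Tendsto (fun k => ‖C (JB (z k)) - C (JB zs)‖) atTop (nhds 0) := by
    have h := hGsqlim.sqrt
    have heq : (fun k => Real.sqrt (‖C (JB (z k)) - C (JB zs)‖^2))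
        = fun k => ‖C (JB (z k)) - C (JB zs)‖ :=
      funext fun k => Real.sqrt_sq (norm_nonneg _)
    rw [heq, Real.sqrt_zero] at h
    exact h
  -- the inner products I1 k tend to 0
  have hI1nonneg : ∀ k, 0 ≤ ⟪(z k - zs) - (JB (z k) - JB zs), JB (z k) - JB zs⟫_ℝ := by
    intro k
    have hm := hBmono (JB (z k)) (JB zs) _ _ ((hJB (z k) (JB (z k))).1 rfl)
      ((hJB zs (JB zs)).1 rfl)
    rw [← smul_sub, real_inner_smul_left] at hm
    have hv : (z k - JB (z k)) - (zs - JB zs) = (z k - zs) - (JB (z k) - JB zs) := by abel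
    rw [hv] at hm
    exact dys_nonneg_cancel (inv_pos.2 hγ0) hm
  have hI1ub : ∀ k, ⟪(z k - zs) - (JB (z k) - JB zs), JB (z k) - JB zs⟫_ℝ
      ≤ (‖z k - zs‖^2 - ‖z (k+1) - zs‖^2
          + 4*γ*((3*‖z 0 - zs‖ + γ*(‖z 0 - zs‖/β))*‖C (JB (z k)) - C (JB zs)‖))/(2*lb) := by
    intro k
    rw [le_div_iff₀ (by positivity)]
    have k2 := key2 k
    have e1 : 2*lb*⟪(z k - zs) - (JB (z k) - JB zs), JB (z k) - JB zs⟫_ℝ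
        ≤ 2*lam k*⟪(z k - zs) - (JB (z k) - JB zs), JB (z k) - JB zs⟫_ℝ := by
      nlinarith [mul_nonneg (sub_nonneg.2 (hlble k)) (hI1nonneg k)]
    have q1 : ‖C (JB (z k)) - C (JB zs)‖
          * ‖JA ((2:ℝ) • JB (z k) - z k - γ • C (JB (z k))) - JB zs‖
        ≤ ‖C (JB (z k)) - C (JB zs)‖ * (3*‖z 0 - zs‖ + γ*(‖z 0 - zs‖/β)) :=
      mul_le_mul_of_nonneg_left (hQR k) (norm_nonneg _)
    have q2 : lam k * (‖C (JB (z k)) - C (JB zs)‖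
          * ‖JA ((2:ℝ) • JB (z k) - z k - γ • C (JB (z k))) - JB zs‖)
        ≤ 2 * (‖C (JB (z k)) - C (JB zs)‖ * (3*‖z 0 - zs‖ + γ*(‖z 0 - zs‖/β))) :=
      mul_le_mul (hlam2 k) q1 (mul_nonneg (norm_nonneg _) (norm_nonneg _)) (by norm_num)
    have e2 : 2*lam k*γ*(‖C (JB (z k)) - C (JB zs)‖
          * ‖JA ((2:ℝ) • JB (z k) - z k - γ • C (JB (z k))) - JB zs‖)
        ≤ 4*γ*((3*‖z 0 - zs‖ + γ*(‖z 0 - zs‖/β))*‖C (JB (z k)) - C (JB zs)‖) := by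
      nlinarith [mul_le_mul_of_nonneg_left q2 hγ0.le]
    linarith
  have hblim : Tendsto (fun k => (‖z k - zs‖^2 - ‖z (k+1) - zs‖^2
      + 4*γ*((3*‖z 0 - zs‖ + γ*(‖z 0 - zs‖/β))*‖C (JB (z k)) - C (JB zs)‖))/(2*lb))
      atTop (nhds 0) := by
    have h := (hdiff.add ((hGlim.const_mul
      (4*γ*(3*‖z 0 - zs‖ + γ*(‖z 0 - zs‖/β)))))).div_const (2*lb)
    simp only [mul_zero, add_zero, zero_div] at h
    refine h.congr (fun k => ?_)
    ring
  have hI1lim : Tendsto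
      (fun k => ⟪(z k - zs) - (JB (z k) - JB zs), JB (z k) - JB zs⟫_ℝ)
      atTop (nhds 0) :=
    squeeze_zero hI1nonneg hI1ub hblim
  -- uniform monotonicity of B on a bounded set
  obtain ⟨φ, hφ0, hφpos, hφmono, hφineq⟩ :=
    hBunif (Metric.closedBall (JB zs) ‖z 0 - zs‖) Metric.isBounded_closedBall
  have hmemP : ∀ k, JB (z k) ∈ Metric.closedBall (JB zs) ‖z 0 - zs‖ := by
    intro k
    rw [Metric.mem_closedBall, dist_eq_norm]
    exact hPR k
  have hmemxs : JB zs ∈ Metric.closedBall (JB zs) ‖z 0 - zs‖ :=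
    Metric.mem_closedBall_self (norm_nonneg _)
  have hφle : ∀ k, φ ‖JB (z k) - JB zs‖
      ≤ ENNReal.ofReal (γ⁻¹ * ⟪(z k - zs) - (JB (z k) - JB zs), JB (z k) - JB zs⟫_ℝ) := by
    intro k
    have h := hφineq (JB (z k)) (hmemP k) (JB zs) hmemxs
      (γ⁻¹ • (z k - JB (z k))) ((hJB (z k) (JB (z k))).1 rfl)
      (γ⁻¹ • (zs - JB zs)) ((hJB zs (JB zs)).1 rfl)
    have hv : (z k - JB (z k)) - (zs - JB zs) = (z k - zs) - (JB (z k) - JB zs) := by abel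
    rw [← smul_sub, hv, real_inner_smul_left] at h
    exact h
  have hofreal : Tendsto (fun k => ENNReal.ofReal
      (γ⁻¹ * ⟪(z k - zs) - (JB (z k) - JB zs), JB (z k) - JB zs⟫_ℝ)) atTop (nhds 0) := by
    rw [← ENNReal.ofReal_zero]
    apply ENNReal.tendsto_ofReal
    simpa using hI1lim.const_mul γ⁻¹
  rw [Metric.tendsto_atTop]
  intro r hr
  have hev : ∀ᶠ k in atTop, ENNReal.ofReal
      (γ⁻¹ * ⟪(z k - zs) - (JB (z k) - JB zs), JB (z k) - JB zs⟫_ℝ) < φ r :=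
    hofreal.eventually_lt_const (hφpos r hr)
  obtain ⟨N, hN⟩ := eventually_atTop.1 hev
  refine ⟨N, fun n hn => ?_⟩
  rw [dist_eq_norm]
  by_contra hcon
  push_neg at hcon
  have hmon := hφmono (Set.mem_Ici.2 hr.le) (Set.mem_Ici.2 (norm_nonneg _)) hcon
  exact absurd (lt_of_le_of_lt (le_trans hmon (hφle n)) (hN n hn)) (lt_irrefl _)
end

section
/- Let A be maximally monotone, L_A-Lipschitz (single-valued) and μ_A-strongly monotone on H, B maximally monotone, and C β-cocoercive. Let ε ∈ (0,1), γ ∈ (0, 2βε), α = 1/(2−ε), λ ∈ (0, 1/α), T the three-operator splitting operator with parameter γ, z* ∈ Fix T, and z⁺ = (1−λ)z + λTz. Then there is a constant c(λ) := (λ/3)·min{2μ_Aγ/(1+γL_A)², (λ/4)(1/(αλ) − 1), (2β − γ/ε)/γ} ∈ [0,1] such that ‖z⁺ − z*‖ ≤ (1 − c(λ))^{1/2} ‖z − z*‖. -/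
/-!
Put `x_B = J_{γB} z`, `x_A = J_{γA}(2 x_B - z - γ C x_B)` and `x* = J_{γB} z*`, so that
`z⁺ - z* = (z - z*) + λ (x_A - x_B)`. Testing the resolvent identities against the monotonicity
of `B`, the strong monotonicity of `A` and the cocoercivity of `C` (plus Young's inequality on the
`C`-term) gives the lower bound
`‖z⁺ - z*‖² + λ(2 - ε - λ)‖x_A - x_B‖² + 2λμ_Aγ‖x_A - x*‖² + λγ(2β - γ/ε)‖Cx_B - Cx*‖² ≤ ‖z - z*‖²`,
while the `A`-resolvent identity and the Lipschitz bound express `z - z*` through the same three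
differences: `‖z - z*‖² ≤ 3((1 + γL_A)²‖x_A - x*‖² + γ²‖Cx_B - Cx*‖² + 4‖x_A - x_B‖²)`.
Comparing coefficients, `c(λ)‖z - z*‖²` is dominated by the slack in the lower bound.
-/

open scoped InnerProductSpace

section Splitting

variable {H : Type*} [NormedAddCommGroup H] [InnerProductSpace ℝ H]

theorem inner_sub_sub_resolvent_nonneg {B : H → Set H} {J : H → H} {γ : ℝ} (hγ : 0 < γ)
    (hJ : ∀ z x, J z = x ↔ γ⁻¹ • (z - x) ∈ B x)
    (hB : ∀ x y u v, u ∈ B x → v ∈ B y → 0 ≤ ⟪u - v, x - y⟫_ℝ) (z z' : H) :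
    0 ≤ ⟪(z - z') - (J z - J z'), J z - J z'⟫_ℝ := by
  have h := hB _ _ _ _ ((hJ z _).mp rfl) ((hJ z' _).mp rfl)
  rw [← smul_sub, real_inner_smul_left, sub_sub_sub_comm] at h
  exact nonneg_of_mul_nonneg_right h (inv_pos.mpr hγ)

variable {e u v w a : H} {β γ ε μ : ℝ}

/- Below, `e, u, v, w, a` stand for `z - z*`, `x_B - x*`, `x_A - x*`, `C x_B - C x*` and
`A x_A - A x*`; `hres` is the difference of the two `A`-resolvent identities. -/
theorem splitting_energy_nonpos (hε : 0 < ε) (hγ : 0 ≤ γ)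
    (hB : 0 ≤ ⟪e - u, u⟫_ℝ) (hres : v + γ • a = (2 : ℝ) • u - e - γ • w)
    (hA : μ * ‖v‖ ^ 2 ≤ ⟪a, v⟫_ℝ) (hC : β * ‖w‖ ^ 2 ≤ ⟪w, u⟫_ℝ) :
    2 * ⟪e, v - u⟫_ℝ + (2 - ε) * ‖v - u‖ ^ 2 + 2 * μ * γ * ‖v‖ ^ 2
      + γ * (2 * β - γ / ε) * ‖w‖ ^ 2 ≤ 0 := by
  have hresv : ‖v‖ ^ 2 + γ * ⟪a, v⟫_ℝ = 2 * ⟪u, v⟫_ℝ - ⟪e, v⟫_ℝ - γ * ⟪w, v⟫_ℝ := by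
    have h := congrArg (⟪·, v⟫_ℝ) hres
    simpa only [inner_add_left, inner_sub_left, real_inner_smul_left,
      real_inner_self_eq_norm_sq] using h
  have hyoung : 2 * γ * ⟪w, u - v⟫_ℝ ≤ ε * ‖v - u‖ ^ 2 + γ * (γ / ε) * ‖w‖ ^ 2 :=
    calc 2 * γ * ⟪w, u - v⟫_ℝ ≤ 2 * ‖v - u‖ * (γ * ‖w‖) := by
          rw [← norm_neg (v - u), neg_sub]
          nlinarith [real_inner_le_norm w (u - v), norm_nonneg w]
      _ ≤ ε * ‖v - u‖ ^ 2 + ε⁻¹ * (γ * ‖w‖) ^ 2 := two_mul_le_add_mul_sq hε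
      _ = ε * ‖v - u‖ ^ 2 + γ * (γ / ε) * ‖w‖ ^ 2 := by ring
  rw [inner_sub_left, real_inner_self_eq_norm_sq] at hB
  rw [inner_sub_right] at hyoung ⊢
  rw [norm_sub_sq_real, real_inner_comm u v] at *
  linarith [mul_le_mul_of_nonneg_left hA hγ, mul_le_mul_of_nonneg_left hC hγ]

theorem norm_add_smul_sq_add_le {lam : ℝ} (hε : 0 < ε) (hγ : 0 ≤ γ)
    (hlam : 0 ≤ lam)
    (hB : 0 ≤ ⟪e - u, u⟫_ℝ) (hres : v + γ • a = (2 : ℝ) • u - e - γ • w)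
    (hA : μ * ‖v‖ ^ 2 ≤ ⟪a, v⟫_ℝ) (hC : β * ‖w‖ ^ 2 ≤ ⟪w, u⟫_ℝ) :
    ‖e + lam • (v - u)‖ ^ 2 + lam * (2 - ε - lam) * ‖v - u‖ ^ 2 + 2 * lam * μ * γ * ‖v‖ ^ 2
      + lam * γ * (2 * β - γ / ε) * ‖w‖ ^ 2 ≤ ‖e‖ ^ 2 := by
  have h := mul_nonpos_of_nonneg_of_nonpos hlam (splitting_energy_nonpos hε hγ hB hres hA hC)
  rw [norm_add_sq_real, inner_smul_right, norm_smul, Real.norm_of_nonneg hlam]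
  linear_combination h

theorem norm_sq_le_of_resolvent_eq {L : ℝ} (hγ : 0 ≤ γ)
    (hres : v + γ • a = (2 : ℝ) • u - e - γ • w) (hL : ‖a‖ ≤ L * ‖v‖) :
    ‖e‖ ^ 2 ≤ 3 * ((1 + γ * L) ^ 2 * ‖v‖ ^ 2 + γ ^ 2 * ‖w‖ ^ 2 + 4 * ‖v - u‖ ^ 2) := by
  have he : e = (v - γ • a) - (2 : ℝ) • (v - u) - γ • w := by
    linear_combination (norm := module) hres
  have hnorm : ‖e‖ ≤ (1 + γ * L) * ‖v‖ + 2 * ‖v - u‖ + γ * ‖w‖ :=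
    calc ‖e‖ ≤ ‖v‖ + ‖γ • a‖ + ‖(2 : ℝ) • (v - u)‖ + ‖γ • w‖ := by
          rw [he]
          linarith [norm_sub_le (v - γ • a - (2 : ℝ) • (v - u)) (γ • w),
            norm_sub_le (v - γ • a) ((2 : ℝ) • (v - u)), norm_sub_le v (γ • a)]
      _ ≤ (1 + γ * L) * ‖v‖ + 2 * ‖v - u‖ + γ * ‖w‖ := by
          simp only [norm_smul, Real.norm_of_nonneg hγ, Real.norm_two]
          nlinarith [mul_le_mul_of_nonneg_left hL hγ]
  nlinarith [norm_nonneg e, sq_nonneg ((1 + γ * L) * ‖v‖ - 2 * ‖v - u‖),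
    sq_nonneg ((1 + γ * L) * ‖v‖ - γ * ‖w‖), sq_nonneg (2 * ‖v - u‖ - γ * ‖w‖)]

end Splitting

/-- The rate `c(λ)` with `α = 1 / (2 - ε)` substituted: `(λ/4)(1/(αλ) - 1) = (2 - ε - λ)/4`. -/
noncomputable def splittingRate (μA LA β γ ε lam : ℝ) : ℝ :=
  lam / 3 * min (2 * μA * γ / (1 + γ * LA) ^ 2) (min ((2 - ε - lam) / 4) ((2 * β - γ / ε) / γ))

section SplittingRate

variable {μA LA β γ ε lam : ℝ}

theorem splittingRate_nonneg (hμA : 0 ≤ μA) (hγ : 0 < γ) (hγβ : γ / ε ≤ 2 * β)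
    (hlam : lam ∈ Set.Icc 0 (2 - ε)) : 0 ≤ splittingRate μA LA β γ ε lam := by
  obtain ⟨hlam0, hlam1⟩ := hlam
  refine mul_nonneg (by positivity) (le_min (by positivity) (le_min ?_ ?_))
  · linarith
  · exact div_nonneg (by linarith) hγ.le

theorem splittingRate_le_one (hε : 0 ≤ ε) (hlam : lam ∈ Set.Icc 0 (2 - ε)) :
    splittingRate μA LA β γ ε lam ≤ 1 := by
  obtain ⟨hlam0, hlam1⟩ := hlam
  calc splittingRate μA LA β γ ε lam ≤ lam / 3 * ((2 - ε - lam) / 4) :=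
        mul_le_mul_of_nonneg_left ((min_le_right _ _).trans (min_le_left _ _)) (by positivity)
    _ ≤ 1 := by nlinarith

theorem le_sqrt_one_sub_splittingRate_mul {p q X Y Z : ℝ} (hp : 0 ≤ p) (hq : 0 ≤ q)
    (hX : 0 ≤ X) (hY : 0 ≤ Y) (hZ : 0 ≤ Z) (hμA : 0 ≤ μA) (hγ : 0 < γ) (hγβ : γ / ε ≤ 2 * β)
    (hε : 0 ≤ ε) (hlam : lam ∈ Set.Icc 0 (2 - ε))
    (hlow : p ^ 2 + lam * (2 - ε - lam) * Z + 2 * lam * μA * γ * X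
      + lam * γ * (2 * β - γ / ε) * Y ≤ q ^ 2)
    (hup : q ^ 2 ≤ 3 * ((1 + γ * LA) ^ 2 * X + γ ^ 2 * Y + 4 * Z)) :
    p ≤ Real.sqrt (1 - splittingRate μA LA β γ ε lam) * q := by
  set m := min (2 * μA * γ / (1 + γ * LA) ^ 2) (min ((2 - ε - lam) / 4) ((2 * β - γ / ε) / γ))
  have hc : splittingRate μA LA β γ ε lam = lam / 3 * m := rfl
  have hc0 := splittingRate_nonneg (LA := LA) hμA hγ hγβ hlam
  have hc1 := splittingRate_le_one (μA := μA) (LA := LA) (β := β) (γ := γ) hε hlam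
  have hmX : m * (1 + γ * LA) ^ 2 ≤ 2 * μA * γ :=
    mul_le_of_le_div₀ (by positivity) (by positivity) (min_le_left _ _)
  have hmZ : m * 4 ≤ 2 - ε - lam :=
    mul_le_of_le_div₀ (by linarith [hlam.2]) (by norm_num)
      ((min_le_right _ _).trans (min_le_left _ _))
  have hmY : m * γ ≤ 2 * β - γ / ε :=
    mul_le_of_le_div₀ (by linarith) hγ.le ((min_le_right _ _).trans (min_le_right _ _))
  have hsq : p ^ 2 ≤ (1 - splittingRate μA LA β γ ε lam) * q ^ 2 := by
    nlinarith [mul_le_mul_of_nonneg_left hup hc0,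
      mul_le_mul_of_nonneg_right hmX (mul_nonneg hlam.1 hX),
      mul_le_mul_of_nonneg_right hmY (mul_nonneg hlam.1 (mul_nonneg hγ.le hY)),
      mul_le_mul_of_nonneg_right hmZ (mul_nonneg hlam.1 hZ)]
  calc p = Real.sqrt (p ^ 2) := (Real.sqrt_sq hp).symm
    _ ≤ Real.sqrt ((1 - splittingRate μA LA β γ ε lam) * q ^ 2) := Real.sqrt_le_sqrt hsq
    _ = Real.sqrt (1 - splittingRate μA LA β γ ε lam) * q := by
      rw [Real.sqrt_mul (by linarith), Real.sqrt_sq hq]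

end SplittingRate

theorem linear_convergence_A_lipschitz_strongly_monotone_general
    {H : Type*} [NormedAddCommGroup H] [InnerProductSpace ℝ H]
    (A : H → H) (B : H → Set H) (C : H → H) (β ε γ α lam μA LA : ℝ)
    (hε : ε ∈ Set.Ioo (0 : ℝ) 1) (hγ : γ ∈ Set.Ioo 0 (2 * β * ε))
    (hα : α = 1 / (2 - ε)) (hlam : lam ∈ Set.Ioo 0 (1 / α))
    (hμA : 0 ≤ μA)
    (hAstrong : ∀ x y, μA * ‖x - y‖ ^ 2 ≤ ⟪A x - A y, x - y⟫_ℝ)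
    (hALip : ∀ x y, ‖A x - A y‖ ≤ LA * ‖x - y‖)
    (hBmono : ∀ x y u v, u ∈ B x → v ∈ B y → 0 ≤ ⟪u - v, x - y⟫_ℝ)
    (hC : ∀ x y, β * ‖C x - C y‖ ^ 2 ≤ ⟪C x - C y, x - y⟫_ℝ)
    (JA JB : H → H)
    (hJA : ∀ z, JA z + γ • A (JA z) = z)
    (hJB : ∀ z x, JB z = x ↔ γ⁻¹ • (z - x) ∈ B x)
    (T : H → H)
    (hT : ∀ z, T z = z - JB z + JA ((2 : ℝ) • JB z - z - γ • C (JB z)))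
    (zs : H) (hfix : T zs = zs)
    (z zp : H) (hzp : zp = (1 - lam) • z + lam • T z) :
    let c := (lam / 3) *
      min (2 * μA * γ / (1 + γ * LA) ^ 2)
        (min ((lam / 4) * (1 / (α * lam) - 1)) ((2 * β - γ / ε) / γ))
    c ∈ Set.Icc (0 : ℝ) 1 ∧ ‖zp - zs‖ ≤ Real.sqrt (1 - c) * ‖z - zs‖ := by
  intro c
  obtain ⟨hε0, hε1⟩ := hε
  obtain ⟨hγ0, hγβ⟩ := hγ
  rw [hα, one_div_one_div] at hlam
  have hlam' : lam ∈ Set.Icc 0 (2 - ε) := Set.Ioo_subset_Icc_self hlam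
  have hc : c = splittingRate μA LA β γ ε lam := by
    have h2ε : 2 - ε ≠ 0 := by linarith
    have hmid : lam / 4 * (1 / (α * lam) - 1) = (2 - ε - lam) / 4 := by
      rw [hα]; field_simp [hlam.1.ne']
    simp only [c, splittingRate, hmid]
  have hγβ' : γ / ε ≤ 2 * β := by rw [div_le_iff₀ hε0]; linarith
  rw [hc]
  refine ⟨⟨splittingRate_nonneg hμA hγ0 hγβ' hlam', splittingRate_le_one hε0.le hlam'⟩, ?_⟩
  set xB := JB z
  set xs := JB zs
  set xA := JA ((2 : ℝ) • xB - z - γ • C xB)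
  have hfixA : JA ((2 : ℝ) • xs - zs - γ • C xs) = xs := by
    have h := hT zs
    rw [hfix] at h
    linear_combination (norm := module) -h
  have hres : (xA - xs) + γ • (A xA - A xs)
      = (2 : ℝ) • (xB - xs) - (z - zs) - γ • (C xB - C xs) := by
    have h := hJA ((2 : ℝ) • xs - zs - γ • C xs)
    rw [hfixA] at h
    linear_combination (norm := module) hJA ((2 : ℝ) • xB - z - γ • C xB) - h
  have hstep : zp - zs = (z - zs) + lam • ((xA - xs) - (xB - xs)) := by
    rw [hzp, hT]; module
  rw [hstep]
  exact le_sqrt_one_sub_splittingRate_mul (norm_nonneg _) (norm_nonneg _) (sq_nonneg _)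
    (sq_nonneg _) (sq_nonneg _) hμA hγ0 hγβ' hε0.le hlam'
    (norm_add_smul_sq_add_le hε0 hγ0.le hlam'.1
      (inner_sub_sub_resolvent_nonneg hγ0 hJB hBmono z zs) hres (hAstrong xA xs) (hC xB xs))
    (norm_sq_le_of_resolvent_eq hγ0.le hres (hALip xA xs))

/-- Linear convergence of one relaxed step of the three-operator splitting when
`A` is single-valued, `L_A`-Lipschitz and `μ_A`-strongly monotone:
`‖z⁺ - z*‖ ≤ (1 - c(λ))^{1/2}‖z - z*‖` with
`c(λ) = (λ/3)·min{2μ_Aγ/(1+γL_A)², (λ/4)(1/(αλ) - 1), (2β - γ/ε)/γ} ∈ [0,1]`. -/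
theorem linear_convergence_A_lipschitz_strongly_monotone
    {H : Type*} [NormedAddCommGroup H] [InnerProductSpace ℝ H] [CompleteSpace H]
    (A : H → H) (B : H → Set H) (C : H → H) (β ε γ α lam μA LA : ℝ)
    (hβ : 0 < β) (hε : ε ∈ Set.Ioo (0 : ℝ) 1) (hγ : γ ∈ Set.Ioo 0 (2 * β * ε))
    (hα : α = 1 / (2 - ε)) (hlam : lam ∈ Set.Ioo 0 (1 / α))
    (hμA : 0 ≤ μA) (hLA : 0 ≤ LA)
    (hAstrong : ∀ x y, μA * ‖x - y‖ ^ 2 ≤ ⟪A x - A y, x - y⟫_ℝ)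
    (hALip : ∀ x y, ‖A x - A y‖ ≤ LA * ‖x - y‖)
    (hBmono : ∀ x y u v, u ∈ B x → v ∈ B y → 0 ≤ ⟪u - v, x - y⟫_ℝ)
    (hC : ∀ x y, β * ‖C x - C y‖ ^ 2 ≤ ⟪C x - C y, x - y⟫_ℝ)
    (JA JB : H → H)
    (hJA : ∀ z, JA z + γ • A (JA z) = z)
    (hJB : ∀ z x, JB z = x ↔ γ⁻¹ • (z - x) ∈ B x)
    (T : H → H)
    (hT : ∀ z, T z = z - JB z + JA ((2 : ℝ) • JB z - z - γ • C (JB z)))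
    (zs : H) (hfix : T zs = zs)
    (z zp : H) (hzp : zp = (1 - lam) • z + lam • T z) :
    let c := (lam / 3) *
      min (2 * μA * γ / (1 + γ * LA) ^ 2)
        (min ((lam / 4) * (1 / (α * lam) - 1)) ((2 * β - γ / ε) / γ))
    c ∈ Set.Icc (0 : ℝ) 1 ∧ ‖zp - zs‖ ≤ Real.sqrt (1 - c) * ‖z - zs‖ :=
  linear_convergence_A_lipschitz_strongly_monotone_general A B C β ε γ α lam μA LA hε hγ hα hlam hμA
    hAstrong hALip hBmono hC JA JB hJA hJB T hT zs hfix z zp hzp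
end

section
/- In H = ℓ²(ℕ; ℝ²), for angles θ_i ∈ (0, π/2] with θ_i → 0, let U = ⊕_i ℝe_{θ_i} and V = ⊕_i ℝe_0 (e_θ the unit vector at angle θ), and apply the three-operator splitting with f = ι_U + (a/2)‖·‖², g = ι_V, h = (1/2)‖·‖², γ = 1, λ_k ≡ 1, a ≥ 0. The resulting operator T is block-diagonal with blocks T_i having eigenvector z_i = (−2cos θ_i sin θ_i/(1+a−2sin²θ_i), 1) with eigenvalue b_i = (a − 2(1−cos θ_i)² + 1)/(a+1). For every function F : ℝ₊ → (0,1) strictly decreasing to 0, the angles θ_i and initial point z⁰ can be chosen so that ‖z^k − z*‖ ≥ e^{-1}F(k) for all k, even though z^k → z* = 0 strongly. In particular, the iteration fails to converge linearly even though both f and h are strongly convex when a > 0. -/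
open Filter Topology
open scoped ENNReal RealInnerProductSpace

/-!
Everything acts blockwise on `ℓ²(ℕ; ℝ²)`. With `V = ⊕ ℝ (1, 0)`, `U = ⊕ ℝ u_i` for unit vectors
`u_i` and `c = 1/(1+a)`, the `i`-th block of `T` is `y ↦ y 1 • v_i` with
`v_i = (0, 1) - c (u_i 1) u_i`, so `v_i` is an eigenvector with eigenvalue `b_i = 1 - c (u_i 1)²`.
Starting from `z⁰ = (τ_i v_i)_i`, the `i`-th block of `z^k` is `τ_i b_i^k v_i`: the iterates tend
to `0` by dominated convergence, while `‖z^k‖ ≥ τ_j b_j^(k+1)` for every `j`.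

Pick `0 = N₀ < N₁ < ⋯` growing fast enough that `τ_j = F(N_j)` is square-summable, and choose
`u_j` so that `b_j = exp(-1/N_{j+1})`. For `N_j ≤ k < N_{j+1}` the `j`-th block alone gives
`‖z^k‖ ≥ F(N_j) exp(-(k+1)/N_{j+1}) ≥ e⁻¹ F(k)`.
-/

namespace lp

section Convergence

variable {ι : Type*} {E : ι → Type*} [∀ i, NormedAddCommGroup (E i)] {p : ℝ≥0∞} [Fact (1 ≤ p)]

theorem tendsto_zero_of_norm_le {α : Type*} {l : Filter α} (hp : p ≠ ∞) {x : α → lp E p}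
    (y : lp E p) (hle : ∀ n i, ‖x n i‖ ≤ ‖y i‖) (hlim : ∀ i, Tendsto (fun n => x n i) l (𝓝 0)) :
    Tendsto x l (𝓝 0) := by
  have hp₀ : 0 < p.toReal := ENNReal.toReal_pos (zero_lt_one.trans_le Fact.out).ne' hp
  have hpow : Tendsto (fun n => ‖x n‖ ^ p.toReal) l (𝓝 0) := by
    simp_rw [norm_rpow_eq_tsum hp₀]
    simpa [Real.zero_rpow hp₀.ne'] using
      tendsto_tsum_of_dominated_convergence ((lp.memℓp y).summable hp₀)
      (fun i => ((hlim i).norm.rpow_const (Or.inr hp₀.le)))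
      (Eventually.of_forall fun n i => by
        rw [Real.norm_of_nonneg (by positivity)]
        gcongr
        exact hle n i)
  have := hpow.rpow_const (p := p.toReal⁻¹) (Or.inr (by positivity))
  rw [Real.zero_rpow (by positivity)] at this
  refine tendsto_zero_iff_norm_tendsto_zero.2 (this.congr fun n => ?_)
  exact Real.rpow_rpow_inv (norm_nonneg _) hp₀.ne'

end Convergence

section Blocks

variable {𝕜 ι : Type*} [RCLike 𝕜] {E : ι → Type*} [∀ i, NormedAddCommGroup (E i)]

section NormedSpace

variable [∀ i, NormedSpace 𝕜 (E i)] {p : ℝ≥0∞}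

variable (p) in
def blockSubmodule (K : ∀ i, Submodule 𝕜 (E i)) : Submodule 𝕜 (lp E p) where
  carrier := {x | ∀ i, x i ∈ K i}
  zero_mem' i := (K i).zero_mem
  add_mem' hx hy i := (K i).add_mem (hx i) (hy i)
  smul_mem' c _ hx i := (K i).smul_mem c (hx i)

@[simp]
theorem mem_blockSubmodule {K : ∀ i, Submodule 𝕜 (E i)} {x : lp E p} :
    x ∈ blockSubmodule p K ↔ ∀ i, x i ∈ K i :=
  Iff.rfl

theorem isClosed_blockSubmodule [Fact (1 ≤ p)] {K : ∀ i, Submodule 𝕜 (E i)}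
    (hK : ∀ i, IsClosed (K i : Set (E i))) : IsClosed (blockSubmodule p K : Set (lp E p)) := by
  have : (blockSubmodule p K : Set (lp E p)) = ⋂ i, (fun x : lp E p => x i) ⁻¹' K i := by
    ext; simp
  rw [this]
  exact isClosed_iInter fun i =>
    (hK i).preimage ((continuous_apply i).comp uniformContinuous_coe.continuous)

theorem blockSubmodule_inf (K L : ∀ i, Submodule 𝕜 (E i)) :
    blockSubmodule p K ⊓ blockSubmodule p L = blockSubmodule p (K ⊓ L) := by
  ext; simp [forall_and]

theorem blockSubmodule_bot : blockSubmodule p (⊥ : ∀ i, Submodule 𝕜 (E i)) = ⊥ := by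
  ext x
  simp only [mem_blockSubmodule, Pi.bot_apply, Submodule.mem_bot, lp.ext_iff, lp.coeFn_zero,
    funext_iff, Pi.zero_apply]

end NormedSpace

variable [∀ i, InnerProductSpace 𝕜 (E i)] (K : ∀ i, Submodule 𝕜 (E i))
  [∀ i, (K i).HasOrthogonalProjection]

noncomputable def blockProj (x : lp E 2) : lp E 2 :=
  ⟨fun i => (K i).starProjection (x i),
    (lp.memℓp x).mono' fun i => (K i).norm_starProjection_apply_le (x i)⟩

theorem blockProj_mem (x : lp E 2) : blockProj K x ∈ blockSubmodule 2 K :=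
  fun i => (K i).starProjection_apply_mem (x i)

theorem sub_blockProj_mem_orthogonal (x : lp E 2) :
    x - blockProj K x ∈ (blockSubmodule 2 K)ᗮ := by
  rw [Submodule.mem_orthogonal]
  intro y hy
  rw [lp.inner_eq_tsum]
  convert tsum_zero with i
  exact Submodule.inner_right_of_mem_orthogonal (hy i)
    ((K i).sub_starProjection_mem_orthogonal (x i))

end Blocks

end lp

theorem Filter.extraction_zero_forall_succ_of_eventually {P : ℕ → ℕ → Prop}
    (h : ∀ j, ∀ᶠ n in atTop, P j n) :
    ∃ N : ℕ → ℕ, StrictMono N ∧ N 0 = 0 ∧ ∀ j, P j (N (j + 1)) := by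
  obtain ⟨φ, hφ, hP⟩ := extraction_forall_of_eventually fun j => (h j).and (eventually_gt_atTop 0)
  refine ⟨fun j => Nat.casesOn j 0 φ, strictMono_nat_of_lt_succ fun j => ?_, rfl,
    fun j => (hP j).1⟩
  cases j with
  | zero => exact (hP 0).2
  | succ j => exact hφ j.lt_succ_self

theorem memℓp_two_geometric_half : Memℓp (fun j : ℕ => (1 / 2 : ℝ) ^ j) 2 :=
  (memℓp_gen (p := 1) (by simpa using summable_geometric_two)).of_exponent_ge (by norm_num)

theorem exists_slow_weights {F : ℝ → ℝ} (hF : ∀ t, 0 ≤ t → F t ∈ Set.Icc 0 1)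
    (hF_anti : AntitoneOn F (Set.Ici 0)) (hF_lim : Tendsto F atTop (𝓝 0)) {η : ℝ} (hη : η < 1) :
    ∃ β τ : ℕ → ℝ, (∀ j, β j ∈ Set.Ioo η 1) ∧ Memℓp τ 2 ∧
      ∀ k : ℕ, ∃ j, Real.exp (-1) * F k ≤ τ j * β j ^ (k + 1) := by
  have hF_lim' := hF_lim.comp tendsto_natCast_atTop_atTop
  obtain ⟨N, hN, hN0, hFN, hNη⟩ : ∃ N : ℕ → ℕ, StrictMono N ∧ N 0 = 0 ∧
      (∀ j, F (N (j + 1)) < (1 / 2) ^ (j + 1)) ∧ ∀ j, 1 / (N (j + 1) : ℝ) < 1 - η := by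
    obtain ⟨N, hN, hN0, h⟩ := Filter.extraction_zero_forall_succ_of_eventually fun j =>
      (hF_lim'.eventually_lt_const (by positivity : (0 : ℝ) < (1 / 2) ^ (j + 1))).and
        (tendsto_one_div_atTop_nhds_zero_nat.eventually_lt_const (sub_pos.2 hη))
    exact ⟨N, hN, hN0, fun j => (h j).1, fun j => (h j).2⟩
  have hNpos (j : ℕ) : (0 : ℝ) < N (j + 1) := by
    exact_mod_cast hN0 ▸ hN j.succ_pos
  refine ⟨fun j => Real.exp (-(1 / N (j + 1))), fun j => F (N j), fun j => ⟨?_, ?_⟩, ?_,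
    fun k => ?_⟩
  · linarith [Real.add_one_le_exp (-(1 / (N (j + 1) : ℝ))), hNη j]
  · exact Real.exp_lt_one_iff.2 (by simpa using hNpos j)
  · refine memℓp_two_geometric_half.mono fun j => ?_
    rw [Real.norm_of_nonneg (hF _ (Nat.cast_nonneg _)).1]
    cases j with
    | zero => simpa [hN0] using (hF 0 le_rfl).2
    | succ j => exact (hFN j).le
  · obtain ⟨j, hjk, hkj⟩ := hN.exists_between_of_tendsto_atTop hN.tendsto_atTop
      (x := k + 1) (by simp [hN0])
    refine ⟨j, ?_⟩
    have hFk : F k ≤ F (N j) :=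
      hF_anti (Set.mem_Ici.2 (Nat.cast_nonneg _)) (Set.mem_Ici.2 (Nat.cast_nonneg _))
        (by exact_mod_cast Nat.lt_succ_iff.1 hjk)
    have hexp : Real.exp (-1) ≤ Real.exp (-(1 / N (j + 1))) ^ (k + 1) := by
      rw [← Real.exp_nat_mul, Real.exp_le_exp, mul_neg, mul_one_div, neg_le_neg_iff, div_le_one (hNpos j)]
      exact_mod_cast hkj
    rw [mul_comm]
    exact mul_le_mul hFk hexp (by positivity) (hF _ (Nat.cast_nonneg _)).1

section Plane

local notation "ℝ²" => EuclideanSpace ℝ (Fin 2)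
local notation "ℓ²" => lp (fun _ : ℕ => ℝ²) 2

noncomputable def blockEigenvalue (c : ℝ) (u : ℝ²) : ℝ :=
  1 - c * u 1 ^ 2

noncomputable def blockEigenvector (c : ℝ) (u : ℝ²) : ℝ² :=
  EuclideanSpace.single 1 1 - (c * u 1) • u

theorem blockEigenvector_apply_one (c : ℝ) (u : ℝ²) :
    blockEigenvector c u 1 = blockEigenvalue c u := by
  simp [blockEigenvector, blockEigenvalue]
  ring

theorem norm_blockEigenvector_le (c : ℝ) {u : ℝ²} (hu : ‖u‖ = 1) :
    ‖blockEigenvector c u‖ ≤ 1 + |c| := by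
  have h1 : |u 1| ≤ 1 := hu ▸ PiLp.norm_apply_le u 1
  calc ‖blockEigenvector c u‖
      ≤ ‖EuclideanSpace.single 1 (1 : ℝ)‖ + ‖(c * u 1) • u‖ := norm_sub_le _ _
    _ = 1 + |c| * |u 1| := by simp [norm_smul, hu]
    _ ≤ 1 + |c| := by nlinarith [abs_nonneg c]

theorem splitting_block_eq (c : ℝ) {u : ℝ²} (hu : ‖u‖ = 1) (y : ℝ²) :
    y - (ℝ ∙ EuclideanSpace.single 0 1).starProjection y
        + c • (ℝ ∙ u).starProjection ((ℝ ∙ EuclideanSpace.single 0 1).starProjection y - y)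
      = y 1 • blockEigenvector c u := by
  rw [Submodule.starProjection_unit_singleton ℝ (by simp),
    Submodule.starProjection_unit_singleton ℝ hu]
  ext j
  fin_cases j <;>
  · simp [blockEigenvector, PiLp.inner_apply, Fin.sum_univ_two]
    ring

theorem exists_blockEigenvalue_eq {c β : ℝ} (hc : 0 < c) (hβ : β ∈ Set.Ioo (1 - c) 1) :
    ∃ u : ℝ², ‖u‖ = 1 ∧ u 1 ≠ 0 ∧ blockEigenvalue c u = β := by
  set σ := (1 - β) / c
  have hσ₀ : 0 < σ := div_pos (sub_pos.2 hβ.2) hc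
  have hσ₁ : σ ≤ 1 := (div_le_one hc).2 (by linarith [hβ.1])
  refine ⟨!₂[√(1 - σ), √σ], ?_, by simpa using (Real.sqrt_pos.2 hσ₀).ne', ?_⟩
  · simp [EuclideanSpace.norm_eq, Fin.sum_univ_two, Real.sq_sqrt hσ₀.le,
      Real.sq_sqrt (sub_nonneg.2 hσ₁)]
  · have : c * σ = 1 - β := mul_div_cancel₀ _ hc.ne'
    simp [blockEigenvalue, Real.sq_sqrt hσ₀.le, this]

theorem span_inf_span_single_zero_eq_bot {u : ℝ²} (hu : u 1 ≠ 0) :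
    (ℝ ∙ u) ⊓ (ℝ ∙ EuclideanSpace.single 0 1) = ⊥ := by
  refine eq_bot_iff.2 fun x hx => ?_
  obtain ⟨⟨r, rfl⟩, ⟨s, hs⟩⟩ := Submodule.mem_inf.1 hx |>.imp Submodule.mem_span_singleton.1
    Submodule.mem_span_singleton.1
  have : r * u 1 = 0 := by simpa using congrArg (· 1) hs.symm
  simp [(mul_eq_zero.1 this).resolve_right hu]

noncomputable def splittingOp (c : ℝ) (u : ℕ → ℝ²) (x : ℓ²) : ℓ² :=
  x - lp.blockProj (fun _ => ℝ ∙ EuclideanSpace.single 0 1) x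
    + c • lp.blockProj (fun i => ℝ ∙ u i)
      (lp.blockProj (fun _ => ℝ ∙ EuclideanSpace.single 0 1) x - x)

variable (c : ℝ) {u : ℕ → ℝ²} (hu : ∀ i, ‖u i‖ = 1)
include hu

theorem splittingOp_apply (x : ℓ²) (i : ℕ) :
    splittingOp c u x i = x i 1 • blockEigenvector c (u i) :=
  splitting_block_eq c (hu i) (x i)

theorem memℓp_smul_blockEigenvector {τ : ℕ → ℝ} (hτ : Memℓp τ 2) :
    Memℓp (fun i => τ i • blockEigenvector c (u i)) 2 :=
  (hτ.const_mul (1 + |c|)).mono' fun i => by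
    rw [norm_smul, norm_mul, Real.norm_of_nonneg (by positivity : (0 : ℝ) ≤ 1 + |c|),
      mul_comm (1 + |c|)]
    exact mul_le_mul_of_nonneg_left (norm_blockEigenvector_le c (hu i)) (norm_nonneg _)

variable {x : ℓ²} {τ : ℕ → ℝ} (hx : ∀ i, x i = τ i • blockEigenvector c (u i))
include hx

theorem splittingOp_iterate_apply (k i : ℕ) :
    (splittingOp c u)^[k] x i
      = (τ i * blockEigenvalue c (u i) ^ k) • blockEigenvector c (u i) := by
  induction k with
  | zero => simp [hx]
  | succ k ih =>
    rw [Function.iterate_succ_apply', splittingOp_apply c hu, ih]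
    simp [blockEigenvector_apply_one, pow_succ, mul_assoc]

theorem abs_mul_abs_pow_le_norm_splittingOp_iterate (k j : ℕ) :
    |τ j| * |blockEigenvalue c (u j)| ^ (k + 1) ≤ ‖(splittingOp c u)^[k] x‖ :=
  calc |τ j| * |blockEigenvalue c (u j)| ^ (k + 1)
      = |((splittingOp c u)^[k] x j) 1| := by
        simp [splittingOp_iterate_apply c hu hx, blockEigenvector_apply_one, abs_mul, pow_succ,
          mul_assoc]
    _ ≤ ‖(splittingOp c u)^[k] x j‖ := PiLp.norm_apply_le ((splittingOp c u)^[k] x j) 1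
    _ ≤ ‖(splittingOp c u)^[k] x‖ := lp.norm_apply_le_norm two_ne_zero _ j

theorem tendsto_splittingOp_iterate (hβ : ∀ i, |blockEigenvalue c (u i)| < 1) :
    Tendsto (fun k => (splittingOp c u)^[k] x) atTop (𝓝 0) := by
  refine lp.tendsto_zero_of_norm_le ENNReal.ofNat_ne_top x (fun k i => ?_) fun i => ?_
  · rw [splittingOp_iterate_apply c hu hx, hx, norm_smul, norm_smul, norm_mul, norm_pow]
    gcongr
    exact mul_le_of_le_one_right (norm_nonneg _) (pow_le_one₀ (norm_nonneg _) (hβ i).le)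
  · simp_rw [splittingOp_iterate_apply c hu hx]
    simpa using ((tendsto_pow_atTop_nhds_zero_of_abs_lt_one (hβ i)).const_mul (τ i)).smul_const
      (blockEigenvector c (u i))

end Plane

/-- Arbitrarily slow convergence of the three-operator splitting: in
`H = ℓ²(ℕ; ℝ²)`, for every function `F` strictly decreasing from `(0,1)` to `0`,
there exist closed subspaces `U, V` with `U ∩ V = {0}` (given together with their
orthogonal projections `P_U`, `P_V`) and an initial point `z⁰` such that the
iterates of `T = I - P_V + (1/(1+a)) P_U ∘ (P_V - I)` (the splitting operator for
`f = ι_U + (a/2)‖·‖²`, `g = ι_V`, `h = (1/2)‖·‖²`, `γ = 1`, `λ_k ≡ 1`) converge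
strongly to the solution `z* = 0` but satisfy `‖z^k - z*‖ ≥ e⁻¹ F(k)` for all `k`. -/
theorem arbitrarily_slow_convergence
    (a : ℝ) (ha : 0 ≤ a) (F : ℝ → ℝ)
    (hF1 : ∀ t : ℝ, 0 ≤ t → F t ∈ Set.Ioo (0 : ℝ) 1)
    (hF2 : StrictAntiOn F (Set.Ici 0))
    (hF3 : Tendsto F atTop (nhds 0)) :
    ∃ (U V : Submodule ℝ (lp (fun _ : ℕ => EuclideanSpace ℝ (Fin 2)) 2))
      (PU PV : lp (fun _ : ℕ => EuclideanSpace ℝ (Fin 2)) 2 →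
        lp (fun _ : ℕ => EuclideanSpace ℝ (Fin 2)) 2)
      (z0 : lp (fun _ : ℕ => EuclideanSpace ℝ (Fin 2)) 2),
      U ⊓ V = ⊥ ∧ IsClosed (U : Set (lp (fun _ : ℕ => EuclideanSpace ℝ (Fin 2)) 2)) ∧
      IsClosed (V : Set (lp (fun _ : ℕ => EuclideanSpace ℝ (Fin 2)) 2)) ∧
      (∀ x, PU x ∈ U) ∧ (∀ x, x - PU x ∈ Uᗮ) ∧
      (∀ x, PV x ∈ V) ∧ (∀ x, x - PV x ∈ Vᗮ) ∧
      (let T := fun x => x - PV x + (1 / (1 + a)) • PU (PV x - x)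
       (∀ k : ℕ, Real.exp (-1) * F k ≤ ‖T^[k] z0 - 0‖) ∧
       Tendsto (fun k => T^[k] z0) atTop (nhds 0)) := by
  set c := 1 / (1 + a)
  have hc : 0 < c := by positivity
  have hc1 : c ≤ 1 := div_le_one_of_le₀ (by linarith) (by linarith)
  obtain ⟨β, τ, hβ, hτ, hslow⟩ :=
    exists_slow_weights (fun t ht => Set.Ioo_subset_Icc_self (hF1 t ht)) hF2.antitoneOn hF3
      (η := 1 - c) (by linarith)
  choose u hu hu₀ hβu using fun j => exists_blockEigenvalue_eq hc (hβ j)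
  refine ⟨lp.blockSubmodule 2 fun i => ℝ ∙ u i,
    lp.blockSubmodule 2 fun _ => ℝ ∙ EuclideanSpace.single 0 1, lp.blockProj _, lp.blockProj _,
    ⟨_, memℓp_smul_blockEigenvector c hu hτ⟩, ?_,
    lp.isClosed_blockSubmodule fun _ => Submodule.closed_of_finiteDimensional _,
    lp.isClosed_blockSubmodule fun _ => Submodule.closed_of_finiteDimensional _,
    lp.blockProj_mem _, lp.sub_blockProj_mem_orthogonal _,
    lp.blockProj_mem _, lp.sub_blockProj_mem_orthogonal _, fun k => ?_,
    tendsto_splittingOp_iterate c hu (fun _ => rfl) fun i => ?_⟩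
  · rw [lp.blockSubmodule_inf, ← lp.blockSubmodule_bot]
    congr 1
    funext i
    exact span_inf_span_single_zero_eq_bot (hu₀ i)
  · obtain ⟨j, hj⟩ := hslow k
    calc Real.exp (-1) * F k ≤ τ j * β j ^ (k + 1) := hj
      _ ≤ |τ j| * |blockEigenvalue c (u j)| ^ (k + 1) := by
        rw [hβu, ← abs_pow, ← abs_mul]
        exact le_abs_self _
      _ ≤ _ := by
        rw [sub_zero]
        exact abs_mul_abs_pow_le_norm_splittingOp_iterate c hu (fun _ => rfl) k j
  · rw [hβu]
    exact abs_lt.2 ⟨by linarith [(hβ i).1], (hβ i).2⟩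
end
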